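/- arXiv:gr-qc/0312014 — 6 statements merged into one kernel-verified Lean document; each statement's English description precedes it below -/
import Mathlib

section
/- For p = q = 1, the quantum quadratic Casimir operator Ĉas := −(Ĉ₁₁)², where Ĉ₁₁ = u₁v₁ + ∂_{u₁}∂_{v₁}, satisfies the operator identity Ĉas = −2(Ĥ₁Ĥ₂ + Ĥ₂Ĥ₁) − D̂² + 1, where Ĥ₁ = −(1/2)(∂²_{u₁} + v₁²), Ĥ₂ = −(1/2)(∂²_{v₁} + u₁²), D̂ = −i(u₁∂_{u₁} − v₁∂_{v₁}). -/
open Complex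

namespace Stmt13

noncomputable def pu (f : ℝ → ℝ → ℂ) : ℝ → ℝ → ℂ := fun u v => deriv (fun u' => f u' v) u
noncomputable def pv (f : ℝ → ℝ → ℂ) : ℝ → ℝ → ℂ := fun u v => deriv (fun v' => f u v') v

/-- `Ĥ₁ = −(1/2)(∂²_{u₁} + v₁²)`. -/
noncomputable def H1op (f : ℝ → ℝ → ℂ) : ℝ → ℝ → ℂ :=
  fun u v => -(1/2 : ℂ) * (pu (pu f) u v + (v:ℂ)^2 * f u v)

/-- `Ĥ₂ = −(1/2)(∂²_{v₁} + u₁²)`. -/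
noncomputable def H2op (f : ℝ → ℝ → ℂ) : ℝ → ℝ → ℂ :=
  fun u v => -(1/2 : ℂ) * (pv (pv f) u v + (u:ℂ)^2 * f u v)

/-- `D̂ = −i(u₁∂_{u₁} − v₁∂_{v₁})`. -/
noncomputable def Dop (f : ℝ → ℝ → ℂ) : ℝ → ℝ → ℂ :=
  fun u v => -I * ((u:ℂ) * pu f u v - (v:ℂ) * pv f u v)

/-- `Ĉ₁₁ = u₁v₁ + ∂_{u₁}∂_{v₁}`. -/
noncomputable def C11op (f : ℝ → ℝ → ℂ) : ℝ → ℝ → ℂ :=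
  fun u v => (u:ℂ) * (v:ℂ) * f u v + pu (pv f) u v

noncomputable def P1 (F : ℝ × ℝ → ℂ) : ℝ × ℝ → ℂ := fun x => fderiv ℝ F x (1, 0)
noncomputable def P2 (F : ℝ × ℝ → ℂ) : ℝ × ℝ → ℂ := fun x => fderiv ℝ F x (0, 1)

lemma contDiff_P1 {F : ℝ × ℝ → ℂ} (hF : ContDiff ℝ (⊤ : ℕ∞) F) : ContDiff ℝ (⊤ : ℕ∞) (P1 F) :=
  (hF.fderiv_right (by simp)).clm_apply contDiff_const

lemma contDiff_P2 {F : ℝ × ℝ → ℂ} (hF : ContDiff ℝ (⊤ : ℕ∞) F) : ContDiff ℝ (⊤ : ℕ∞) (P2 F) :=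
  (hF.fderiv_right (by simp)).clm_apply contDiff_const

lemma hasDerivAt_P1 {F : ℝ × ℝ → ℂ} (hF : ContDiff ℝ (⊤ : ℕ∞) F) (u v : ℝ) :
    HasDerivAt (fun u' => F (u', v)) (P1 F (u, v)) u := by
  have h1 : HasDerivAt (fun u' : ℝ => (u', v)) ((1:ℝ), (0:ℝ)) u :=
    (hasDerivAt_id u).prodMk (hasDerivAt_const u v)
  exact ((hF.differentiable (by simp) (u, v)).hasFDerivAt).comp_hasDerivAt u h1

lemma hasDerivAt_P2 {F : ℝ × ℝ → ℂ} (hF : ContDiff ℝ (⊤ : ℕ∞) F) (u v : ℝ) :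
    HasDerivAt (fun v' => F (u, v')) (P2 F (u, v)) v := by
  have h1 : HasDerivAt (fun v' : ℝ => (u, v')) ((0:ℝ), (1:ℝ)) v :=
    (hasDerivAt_const v u).prodMk (hasDerivAt_id v)
  exact ((hF.differentiable (by simp) (u, v)).hasFDerivAt).comp_hasDerivAt v h1

lemma P1_P2_comm {F : ℝ × ℝ → ℂ} (hF : ContDiff ℝ (⊤ : ℕ∞) F) : P1 (P2 F) = P2 (P1 F) := by
  funext x
  have hd : ∀ y, HasFDerivAt F (fderiv ℝ F y) y := fun y =>
    (hF.differentiable (by simp) y).hasFDerivAt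
  have hd2 : DifferentiableAt ℝ (fderiv ℝ F) x :=
    ((hF.fderiv_right (m := (⊤ : ℕ∞)) (by simp)).differentiable (by simp)) x
  have hsymm := second_derivative_symmetric hd hd2.hasFDerivAt ((1:ℝ),(0:ℝ)) ((0:ℝ),(1:ℝ))
  have e1 : HasFDerivAt (P1 F)
      ((ContinuousLinearMap.apply ℝ ℂ ((1:ℝ),(0:ℝ))).comp (fderiv ℝ (fderiv ℝ F) x)) x :=
    (ContinuousLinearMap.apply ℝ ℂ ((1:ℝ),(0:ℝ))).hasFDerivAt.comp x hd2.hasFDerivAt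
  have e2 : HasFDerivAt (P2 F)
      ((ContinuousLinearMap.apply ℝ ℂ ((0:ℝ),(1:ℝ))).comp (fderiv ℝ (fderiv ℝ F) x)) x :=
    (ContinuousLinearMap.apply ℝ ℂ ((0:ℝ),(1:ℝ))).hasFDerivAt.comp x hd2.hasFDerivAt
  show fderiv ℝ (P2 F) x (1,0) = fderiv ℝ (P1 F) x (0,1)
  rw [e1.fderiv, e2.fderiv]
  simpa using hsymm

lemma hasDerivAt_ofReal (x : ℝ) : HasDerivAt (fun t : ℝ => (t : ℂ)) 1 x := by
  simpa using (hasDerivAt_id x).ofReal_comp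

/-- For `p = q = 1`, the quadratic Casimir `Ĉas = −(Ĉ₁₁)²` satisfies
`Ĉas = −2(Ĥ₁Ĥ₂ + Ĥ₂Ĥ₁) − D̂² + 1` on smooth functions. -/
theorem casimir_identity_pq11 (f : ℝ → ℝ → ℂ)
    (hf : ContDiff ℝ (⊤ : ℕ∞) (fun x : ℝ × ℝ => f x.1 x.2)) (u v : ℝ) :
    -(C11op (C11op f) u v)
      = -2 * (H1op (H2op f) u v + H2op (H1op f) u v) - Dop (Dop f) u v + f u v := by
  set F : ℝ × ℝ → ℂ := fun x : ℝ × ℝ => f x.1 x.2 with hFdef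
  -- smoothness of derivatives
  have h1 := contDiff_P1 hf
  have h2 := contDiff_P2 hf
  have h11 := contDiff_P1 h1
  have h22 := contDiff_P2 h2
  have h12 := contDiff_P1 h2   -- P1 (P2 F)
  have h21 := contDiff_P2 h1
  -- first derivatives
  have epu_f : pu f = fun a b => P1 F (a, b) := by
    funext a b; exact (hasDerivAt_P1 hf a b).deriv
  have epv_f : pv f = fun a b => P2 F (a, b) := by
    funext a b; exact (hasDerivAt_P2 hf a b).deriv
  have epvpv : pv (pv f) = fun a b => P2 (P2 F) (a, b) := by
    rw [epv_f]; funext a b; exact (hasDerivAt_P2 h2 a b).deriv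
  have epupu : pu (pu f) = fun a b => P1 (P1 F) (a, b) := by
    rw [epu_f]; funext a b; exact (hasDerivAt_P1 h1 a b).deriv
  have epupv : pu (pv f) = fun a b => P1 (P2 F) (a, b) := by
    rw [epv_f]; funext a b; exact (hasDerivAt_P1 h2 a b).deriv
  have hpow : ∀ a : ℝ, HasDerivAt (fun t : ℝ => ((t:ℂ))^2) (2*(a:ℂ)) a := by
    intro a
    have h := hasDerivAt_ofReal a
    simpa [pow_two, two_mul] using h.fun_mul h
  -- H2 chain
  have eH2 : H2op f = fun a b => -(1/2:ℂ) * (P2 (P2 F) (a, b) + (a:ℂ)^2 * F (a, b)) := by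
    funext a b; simp only [H2op, epvpv]; rfl
  have eH2pu : pu (H2op f) = fun a b =>
      -(1/2:ℂ) * (P1 (P2 (P2 F)) (a, b) + (2*(a:ℂ) * F (a, b) + (a:ℂ)^2 * P1 F (a, b))) := by
    rw [eH2]; funext a b
    exact (((hasDerivAt_P1 h22 a b).add ((hpow a).mul (hasDerivAt_P1 hf a b))).const_mul
      (-(1/2:ℂ))).deriv
  have eH2puu : pu (pu (H2op f)) = fun a b =>
      -(1/2:ℂ) * (P1 (P1 (P2 (P2 F))) (a, b) +
        ((2 * F (a, b) + 2*(a:ℂ) * P1 F (a, b)) +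
         (2*(a:ℂ) * P1 F (a, b) + (a:ℂ)^2 * P1 (P1 F) (a, b)))) := by
    rw [eH2pu]; funext a b
    have hlin : HasDerivAt (fun t : ℝ => 2*((t:ℂ))) 2 a := by
      simpa using (hasDerivAt_ofReal a).const_mul (2:ℂ)
    exact (((hasDerivAt_P1 (contDiff_P1 h22) a b).add
      ((hlin.mul (hasDerivAt_P1 hf a b)).add
        ((hpow a).mul (hasDerivAt_P1 h1 a b)))).const_mul (-(1/2:ℂ))).deriv
  -- H1 chain
  have eH1 : H1op f = fun a b => -(1/2:ℂ) * (P1 (P1 F) (a, b) + (b:ℂ)^2 * F (a, b)) := by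
    funext a b; simp only [H1op, epupu]; rfl
  have eH1pv : pv (H1op f) = fun a b =>
      -(1/2:ℂ) * (P2 (P1 (P1 F)) (a, b) + (2*(b:ℂ) * F (a, b) + (b:ℂ)^2 * P2 F (a, b))) := by
    rw [eH1]; funext a b
    exact (((hasDerivAt_P2 h11 a b).add ((hpow b).mul (hasDerivAt_P2 hf a b))).const_mul
      (-(1/2:ℂ))).deriv
  have eH1pvv : pv (pv (H1op f)) = fun a b =>
      -(1/2:ℂ) * (P2 (P2 (P1 (P1 F))) (a, b) +
        ((2 * F (a, b) + 2*(b:ℂ) * P2 F (a, b)) +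
         (2*(b:ℂ) * P2 F (a, b) + (b:ℂ)^2 * P2 (P2 F) (a, b)))) := by
    rw [eH1pv]; funext a b
    have hlin : HasDerivAt (fun t : ℝ => 2*((t:ℂ))) 2 b := by
      simpa using (hasDerivAt_ofReal b).const_mul (2:ℂ)
    exact (((hasDerivAt_P2 (contDiff_P2 h11) a b).add
      ((hlin.mul (hasDerivAt_P2 hf a b)).add
        ((hpow b).mul (hasDerivAt_P2 h2 a b)))).const_mul (-(1/2:ℂ))).deriv
  -- D chain
  have eD : Dop f = fun (a b : ℝ) => -I * ((a:ℂ) * P1 F (a, b) - (b:ℂ) * P2 F (a, b)) := by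
    funext a b; simp only [Dop, epu_f, epv_f]
  have eDpu : pu (Dop f) = fun (a b : ℝ) =>
      -I * ((1 * P1 F (a, b) + (a:ℂ) * P1 (P1 F) (a, b)) - (b:ℂ) * P1 (P2 F) (a, b)) := by
    rw [eD]; funext a b
    exact ((((hasDerivAt_ofReal a).mul (hasDerivAt_P1 h1 a b)).sub
      ((hasDerivAt_P1 h2 a b).const_mul (b:ℂ))).const_mul (-I)).deriv
  have eDpv : pv (Dop f) = fun (a b : ℝ) =>
      -I * ((a:ℂ) * P2 (P1 F) (a, b) - (1 * P2 F (a, b) + (b:ℂ) * P2 (P2 F) (a, b))) := by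
    rw [eD]; funext a b
    exact ((((hasDerivAt_P2 h1 a b).const_mul (a:ℂ)).sub
      ((hasDerivAt_ofReal b).mul (hasDerivAt_P2 h2 a b))).const_mul (-I)).deriv
  -- C11 chain
  have eC : C11op f = fun (a b : ℝ) => (a:ℂ) * (b:ℂ) * F (a, b) + P1 (P2 F) (a, b) := by
    funext a b; simp only [C11op, epupv]; rfl
  have epvC : pv (C11op f) = fun (a b : ℝ) =>
      (((a:ℂ) * 1) * F (a, b) + ((a:ℂ) * (b:ℂ)) * P2 F (a, b)) + P2 (P1 (P2 F)) (a, b) := by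
    rw [eC]; funext a b
    exact ((((hasDerivAt_ofReal b).const_mul (a:ℂ)).mul (hasDerivAt_P2 hf a b)).add
      (hasDerivAt_P2 h12 a b)).deriv
  have epuvC : pu (pv (C11op f)) = fun (a b : ℝ) =>
      (((1 * 1) * F (a, b) + ((a:ℂ) * 1) * P1 F (a, b)) +
       ((1 * (b:ℂ)) * P2 F (a, b) + ((a:ℂ) * (b:ℂ)) * P1 (P2 F) (a, b))) +
      P1 (P2 (P1 (P2 F))) (a, b) := by
    rw [epvC]; funext a b
    exact (((((hasDerivAt_ofReal a).mul_const (1:ℂ)).mul (hasDerivAt_P1 hf a b)).add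
      ((((hasDerivAt_ofReal a).mul_const ((b:ℂ))).mul (hasDerivAt_P1 h2 a b)))).add
      (hasDerivAt_P1 (contDiff_P2 h12) a b)).deriv
  -- assembled scalar values
  have hC2 : C11op (C11op f) u v
      = (u:ℂ) * (v:ℂ) * ((u:ℂ) * (v:ℂ) * F (u, v) + P1 (P2 F) (u, v)) +
        ((((1 * 1) * F (u, v) + ((u:ℂ) * 1) * P1 F (u, v)) +
          ((1 * (v:ℂ)) * P2 F (u, v) + ((u:ℂ) * (v:ℂ)) * P1 (P2 F) (u, v))) +
         P1 (P2 (P1 (P2 F))) (u, v)) := by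
    show (u:ℂ) * (v:ℂ) * (C11op f u v) + pu (pv (C11op f)) u v = _
    rw [epuvC, eC]
  have hH12 : H1op (H2op f) u v
      = -(1/2:ℂ) * ((-(1/2:ℂ) * (P1 (P1 (P2 (P2 F))) (u, v) +
          ((2 * F (u, v) + 2*(u:ℂ) * P1 F (u, v)) +
           (2*(u:ℂ) * P1 F (u, v) + (u:ℂ)^2 * P1 (P1 F) (u, v))))) +
        (v:ℂ)^2 * (-(1/2:ℂ) * (P2 (P2 F) (u, v) + (u:ℂ)^2 * F (u, v)))) := by
    show -(1/2:ℂ) * (pu (pu (H2op f)) u v + (v:ℂ)^2 * H2op f u v) = _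
    rw [eH2puu, eH2]
  have hH21 : H2op (H1op f) u v
      = -(1/2:ℂ) * ((-(1/2:ℂ) * (P2 (P2 (P1 (P1 F))) (u, v) +
          ((2 * F (u, v) + 2*(v:ℂ) * P2 F (u, v)) +
           (2*(v:ℂ) * P2 F (u, v) + (v:ℂ)^2 * P2 (P2 F) (u, v))))) +
        (u:ℂ)^2 * (-(1/2:ℂ) * (P1 (P1 F) (u, v) + (v:ℂ)^2 * F (u, v)))) := by
    show -(1/2:ℂ) * (pv (pv (H1op f)) u v + (u:ℂ)^2 * H1op f u v) = _
    rw [eH1pvv, eH1]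
  have hDD : Dop (Dop f) u v
      = -((u:ℂ) * P1 F (u, v) + (v:ℂ) * P2 F (u, v) + (u:ℂ)^2 * P1 (P1 F) (u, v) +
          (v:ℂ)^2 * P2 (P2 F) (u, v) - 2*(u:ℂ)*(v:ℂ) * P1 (P2 F) (u, v)) := by
    show -I * ((u:ℂ) * pu (Dop f) u v - (v:ℂ) * pv (Dop f) u v) = _
    rw [eDpu, eDpv, ← P1_P2_comm hf]
    beta_reduce
    linear_combination ((u:ℂ) * P1 F (u, v) + (v:ℂ) * P2 F (u, v) +
      (u:ℂ)^2 * P1 (P1 F) (u, v) + (v:ℂ)^2 * P2 (P2 F) (u, v) -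
      2*(u:ℂ)*(v:ℂ) * P1 (P2 F) (u, v)) * Complex.I_mul_I
  -- equality of fourth mixed derivatives
  have qa : P1 (P1 (P2 (P2 F))) = P1 (P2 (P1 (P2 F))) := congrArg P1 (P1_P2_comm h2)
  have qb : P2 (P2 (P1 (P1 F))) = P1 (P2 (P1 (P2 F))) := by
    rw [← P1_P2_comm h1, ← P1_P2_comm hf, ← P1_P2_comm (contDiff_P1 h2)]
  show -(C11op (C11op f) u v)
      = -2 * (H1op (H2op f) u v + H2op (H1op f) u v) - Dop (Dop f) u v + F (u, v)
  rw [hC2, hH12, hH21, hDD, qa, qb]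
  ring

end Stmt13
end

section
/- Let V be the complex vector space with basis {Ψ_{lmn} : l ∈ ℕ, m,n ∈ ℤ, |m| ≤ l, |n| ≤ l}. Define operators L₃Ψ_{lmn} = mΨ_{lmn}, J₃Ψ_{lmn} = nΨ_{lmn}, L±Ψ_{lmn} = √((l±m+1)(l∓m)) Ψ_{l,m±1,n}, J±Ψ_{lmn} = √((l±n+1)(l∓n)) Ψ_{l,m,n±1}, and C₀Ψ_{lmn} = [√((l−m+1)(l+m+1)(l−n+1)(l+n+1))/(2l+3)] Ψ_{l+1,m,n} + [√((l−m)(l+m)(l−n)(l+n))/(2l−1)] Ψ_{l−1,m,n}, plus C₁^+ acting as in the given table. Then any nonzero subspace U ⊆ V invariant under the algebra generated by these operators contains all basis vectors Ψ_{lmn}, i.e. the representation is irreducible. -/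
/-!
Each basis vector `Ψ l m n` is a joint eigenvector of `L₃`, `J₃` and `L₊L₋`, with eigenvalues
`m`, `n` and `(l - m + 1)(l + m)`, and these triples separate basis vectors. Applying
`A - μ` for such an operator `A` kills coordinates of a nonzero vector of `U` one at a time,
so `U` contains some `Ψ l m n`. Inside a level `l` the ladder operators `L±`, `J±` have nonzero
coefficients, so `U` contains `Ψ l 0 0`. Finally `J₋C₁⁺ - (l - 1)C₀` and `J₋C₁⁺ + (l + 2)C₀`
send `Ψ l 0 0` to nonzero multiples of `Ψ (l+1) 0 0` and (for `l > 0`) `Ψ (l-1) 0 0`, so `U`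
contains every `Ψ l 0 0`, hence every basis vector.
-/

namespace Stmt14

def InRange (l : ℕ) (m n : ℤ) : Prop := |m| ≤ (l:ℤ) ∧ |n| ≤ (l:ℤ)

theorem InRange.swap {l : ℕ} {m n : ℤ} (h : InRange l m n) : InRange l n m := ⟨h.2, h.1⟩

theorem InRange.mem_Icc {l : ℕ} {m n : ℤ} (h : InRange l m n) : m ∈ Set.Icc (-(l:ℤ)) l :=
  abs_le.1 h.1

theorem inRange_zero_zero (l : ℕ) : InRange l 0 0 := ⟨by simp, by simp⟩

theorem _root_.Int.of_mem_Icc_of_step {a b : ℤ} {P : ℤ → Prop}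
    (hup : ∀ k, a ≤ k → k < b → P k → P (k + 1)) (hdown : ∀ k, a < k → k ≤ b → P k → P (k - 1))
    {i j : ℤ} (hi : i ∈ Set.Icc a b) (hj : j ∈ Set.Icc a b) (h : P i) : P j := by
  rcases le_total i j with hij | hji
  · revert hj
    induction j, hij using Int.leInduction with
    | base => exact fun _ => h
    | succ k hik ih =>
      intro hk
      exact hup k (hi.1.trans hik) (by linarith [hk.2]) (ih ⟨hi.1.trans hik, by linarith [hk.2]⟩)
  · revert hj
    induction j, hji using Int.leInductionDown with
    | base => exact fun _ => h
    | pred k hki ih =>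
      intro hk
      exact hdown k (by linarith [hk.1]) (hki.trans hi.2) (ih ⟨by linarith [hk.1], hki.trans hi.2⟩)

theorem _root_.Real.sqrt_mul_sqrt_eq {x y z : ℝ} (hx : 0 ≤ x) (hz : 0 ≤ z) (h : x * y = z ^ 2) :
    √x * √y = z := by
  rw [← Real.sqrt_mul hx, h, Real.sqrt_sq hz]

theorem _root_.Submodule.mem_of_sum_smul_mem_of_separating {K V ι : Type*} [Field K]
    [AddCommGroup V] [Module K V] {U : Submodule K V} {b : ι → V}
    (hsep : ∀ i j, i ≠ j → ∃ (A : V →ₗ[K] V) (μ : ι → K),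
      U ≤ U.comap A ∧ (∀ t, A (b t) = μ t • b t) ∧ μ i ≠ μ j)
    (s : Finset ι) {c : ι → K} (hs : ∑ t ∈ s, c t • b t ∈ U) {i : ι} (hi : i ∈ s)
    (hc : c i ≠ 0) : b i ∈ U := by
  classical
  induction s using Finset.strongInduction generalizing c with
  | H s ih =>
      by_cases hsi : s = {i}
      · rw [hsi, Finset.sum_singleton] at hs
        exact (U.smul_mem_iff hc).1 hs
      obtain ⟨j, hjs, hji⟩ : ∃ j ∈ s, j ≠ i := by
        by_contra! h
        exact hsi (Finset.eq_singleton_iff_unique_mem.2 ⟨hi, h⟩)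
      obtain ⟨A, μ, hAU, hAb, hμ⟩ := hsep i j hji.symm
      -- applying `A - μ j` kills the `j`-th term and keeps the `i`-th one
      have hsub : ∑ t ∈ s.erase j, (c t * (μ t - μ j)) • b t ∈ U := by
        rw [Finset.sum_erase _ (by simp)]
        convert U.sub_mem (hAU hs) (U.smul_mem (μ j) hs) using 1
        simp only [map_sum, map_smul, hAb, Finset.smul_sum, ← Finset.sum_sub_distrib]
        refine Finset.sum_congr rfl fun t _ => ?_
        module
      exact ih _ (Finset.erase_ssubset hjs) hsub (Finset.mem_erase.2 ⟨hji.symm, hi⟩)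
        (mul_ne_zero hc (sub_ne_zero.2 hμ))

theorem _root_.Module.Basis.exists_mem_of_separating {K V ι : Type*} [Field K] [AddCommGroup V]
    [Module K V] {U : Submodule K V} (B : Module.Basis ι K V)
    (hsep : ∀ i j, i ≠ j → ∃ (A : V →ₗ[K] V) (μ : ι → K),
      U ≤ U.comap A ∧ (∀ t, A (B t) = μ t • B t) ∧ μ i ≠ μ j)
    (hU : U ≠ ⊥) : ∃ i, B i ∈ U := by
  obtain ⟨x, hxU, hx⟩ := Submodule.exists_mem_ne_zero_of_ne_bot hU
  obtain ⟨i, hi⟩ : (B.repr x).support.Nonempty := by simpa using hx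
  refine ⟨i, U.mem_of_sum_smul_mem_of_separating hsep _ ?_ hi (Finsupp.mem_support_iff.1 hi)⟩
  have hx_eq := B.linearCombination_repr x
  rw [Finsupp.linearCombination_apply, Finsupp.sum] at hx_eq
  rwa [hx_eq]

section Ladder

variable {V : Type*} [AddCommGroup V] [Module ℂ V] {Ψ : ℕ → ℤ → ℤ → V} {U : Submodule ℂ V}

def IsRaising (Ψ : ℕ → ℤ → ℤ → V) (A : V →ₗ[ℂ] V) : Prop :=
  ∀ (l : ℕ) (m n : ℤ), InRange l m n →
    A (Ψ l m n) = (Real.sqrt (((l:ℝ) + m + 1) * ((l:ℝ) - m)) : ℂ) • Ψ l (m+1) n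

def IsLowering (Ψ : ℕ → ℤ → ℤ → V) (A : V →ₗ[ℂ] V) : Prop :=
  ∀ (l : ℕ) (m n : ℤ), InRange l m n →
    A (Ψ l m n) = (Real.sqrt (((l:ℝ) - m + 1) * ((l:ℝ) + m)) : ℂ) • Ψ l (m-1) n

theorem IsRaising.mem {A : V →ₗ[ℂ] V} (hA : IsRaising Ψ A) (hAU : U ≤ U.comap A)
    {l : ℕ} {m n : ℤ} (h : InRange l m n) (hm : m < l) (hmem : Ψ l m n ∈ U) :
    Ψ l (m+1) n ∈ U := by
  have h₁ : -(l:ℝ) ≤ m := by exact_mod_cast h.mem_Icc.1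
  have h₂ : (m:ℝ) + 1 ≤ l := by exact_mod_cast hm
  have hc : (Real.sqrt (((l:ℝ) + m + 1) * ((l:ℝ) - m)) : ℂ) ≠ 0 :=
    Complex.ofReal_ne_zero.2 (Real.sqrt_pos.2 (mul_pos (by linarith) (by linarith))).ne'
  exact (U.smul_mem_iff hc).1 (hA l m n h ▸ hAU hmem)

theorem IsLowering.mem {A : V →ₗ[ℂ] V} (hA : IsLowering Ψ A) (hAU : U ≤ U.comap A)
    {l : ℕ} {m n : ℤ} (h : InRange l m n) (hm : -(l:ℤ) < m) (hmem : Ψ l m n ∈ U) :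
    Ψ l (m-1) n ∈ U := by
  have h₁ : -(l:ℝ) + 1 ≤ m := by exact_mod_cast hm
  have h₂ : (m:ℝ) ≤ l := by exact_mod_cast h.mem_Icc.2
  have hc : (Real.sqrt (((l:ℝ) - m + 1) * ((l:ℝ) + m)) : ℂ) ≠ 0 :=
    Complex.ofReal_ne_zero.2 (Real.sqrt_pos.2 (mul_pos (by linarith) (by linarith))).ne'
  exact (U.smul_mem_iff hc).1 (hA l m n h ▸ hAU hmem)

theorem mem_of_mem_of_raising_lowering {Lp Lm : V →ₗ[ℂ] V} (hLp : IsRaising Ψ Lp)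
    (hLm : IsLowering Ψ Lm) (hLpU : U ≤ U.comap Lp) (hLmU : U ≤ U.comap Lm)
    {l : ℕ} {m m' n : ℤ} (h : InRange l m n) (h' : InRange l m' n) (hmem : Ψ l m n ∈ U) :
    Ψ l m' n ∈ U :=
  Int.of_mem_Icc_of_step (P := fun k => Ψ l k n ∈ U)
    (fun _ hk₁ hk₂ => hLp.mem hLpU ⟨abs_le.2 ⟨hk₁, hk₂.le⟩, h.2⟩ hk₂)
    (fun _ hk₁ hk₂ => hLm.mem hLmU ⟨abs_le.2 ⟨hk₁.le, hk₂⟩, h.2⟩ hk₁)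
    h.mem_Icc h'.mem_Icc hmem

theorem mem_of_mem_same_level {Lp Lm Jp Jm : V →ₗ[ℂ] V} (hLp : IsRaising Ψ Lp)
    (hLm : IsLowering Ψ Lm) (hJp : IsRaising (fun l m n => Ψ l n m) Jp)
    (hJm : IsLowering (fun l m n => Ψ l n m) Jm) (hLpU : U ≤ U.comap Lp)
    (hLmU : U ≤ U.comap Lm) (hJpU : U ≤ U.comap Jp) (hJmU : U ≤ U.comap Jm)
    {l : ℕ} {m n m' n' : ℤ} (h : InRange l m n) (h' : InRange l m' n') (hmem : Ψ l m n ∈ U) :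
    Ψ l m' n' ∈ U :=
  have h'' : InRange l m' n := ⟨h'.1, h.2⟩
  mem_of_mem_of_raising_lowering (Ψ := fun l m n => Ψ l n m) hJp hJm hJpU hJmU h''.swap h'.swap
    (mem_of_mem_of_raising_lowering hLp hLm hLpU hLmU h h'' hmem)

theorem raising_lowering_apply {Lp Lm : V →ₗ[ℂ] V} (hLp : IsRaising Ψ Lp)
    (hLm : IsLowering Ψ Lm) {l : ℕ} {m n : ℤ} (h : InRange l m n) :
    Lp (Lm (Ψ l m n)) = (((l:ℂ) - m + 1) * (l + m)) • Ψ l m n := by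
  obtain ⟨hm₁, hm₂⟩ := h.mem_Icc
  rw [hLm l m n h, map_smul]
  by_cases hm : -(l:ℤ) < m
  · have h' : InRange l (m-1) n := ⟨abs_le.2 ⟨by omega, by omega⟩, h.2⟩
    have h₁ : -(l:ℝ) ≤ m := by exact_mod_cast hm₁
    have h₂ : (m:ℝ) ≤ l := by exact_mod_cast hm₂
    rw [hLp l (m-1) n h', sub_add_cancel, smul_smul, ← Complex.ofReal_mul,
      show (l:ℝ) + ((m - 1 : ℤ) : ℝ) + 1 = l + m by push_cast; ring,
      show (l:ℝ) - ((m - 1 : ℤ) : ℝ) = l - m + 1 by push_cast; ring, mul_comm ((l:ℝ) + m),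
      Real.mul_self_sqrt (mul_nonneg (by linarith) (by linarith))]
    push_cast
    rfl
  · -- at `m = -l` the coefficient of `Ψ l (-l-1) n` vanishes
    have hm : (m:ℂ) = -l := by exact_mod_cast (by omega : m = -(l:ℤ))
    have hm' : (m:ℝ) = -l := by exact_mod_cast (by omega : m = -(l:ℤ))
    simp [hm, hm']

theorem exists_inRange_mem {L3 J3 Lp Lm : V →ₗ[ℂ] V}
    (hindep : LinearIndependent ℂ
      (fun t : {t : ℕ × ℤ × ℤ // InRange t.1 t.2.1 t.2.2} => Ψ t.1.1 t.1.2.1 t.1.2.2))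
    (hspan : Submodule.span ℂ
      (Set.range fun t : {t : ℕ × ℤ × ℤ // InRange t.1 t.2.1 t.2.2} =>
        Ψ t.1.1 t.1.2.1 t.1.2.2) = ⊤)
    (hL3 : ∀ (l : ℕ) (m n : ℤ), InRange l m n → L3 (Ψ l m n) = (m:ℂ) • Ψ l m n)
    (hJ3 : ∀ (l : ℕ) (m n : ℤ), InRange l m n → J3 (Ψ l m n) = (n:ℂ) • Ψ l m n)
    (hLp : IsRaising Ψ Lp) (hLm : IsLowering Ψ Lm) (hL3U : U ≤ U.comap L3)
    (hJ3U : U ≤ U.comap J3) (hLpU : U ≤ U.comap Lp) (hLmU : U ≤ U.comap Lm) (hU : U ≠ ⊥) :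
    ∃ l m n, InRange l m n ∧ Ψ l m n ∈ U := by
  have hsep : ∀ i j : {t : ℕ × ℤ × ℤ // InRange t.1 t.2.1 t.2.2}, i ≠ j →
      ∃ (A : V →ₗ[ℂ] V) (μ : {t : ℕ × ℤ × ℤ // InRange t.1 t.2.1 t.2.2} → ℂ), U ≤ U.comap A ∧
        (∀ t, A (Ψ t.1.1 t.1.2.1 t.1.2.2) = μ t • Ψ t.1.1 t.1.2.1 t.1.2.2) ∧ μ i ≠ μ j := by
    rintro ⟨⟨l₀, m₀, n₀⟩, h₀⟩ ⟨⟨l₁, m₁, n₁⟩, h₁⟩ hne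
    by_cases hm : m₀ = m₁
    · by_cases hn : n₀ = n₁
      · subst hm hn
        have hl : l₀ ≠ l₁ := fun hl => hne (by subst hl; rfl)
        -- the eigenvalues of `L₊ L₋` differ by `(l₀ - l₁) (l₀ + l₁ + 1)`
        refine ⟨Lp ∘ₗ Lm, fun t => ((t.1.1:ℂ) - t.1.2.1 + 1) * (t.1.1 + t.1.2.1),
          fun _ hx => hLpU (hLmU hx), fun t => raising_lowering_apply hLp hLm t.2, fun heq => hl ?_⟩
        have hprod : ((l₀:ℂ) - l₁) * ((l₀ + l₁ + 1 : ℕ) : ℂ) = 0 := by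
          push_cast
          linear_combination heq
        exact_mod_cast sub_eq_zero.1
          ((mul_eq_zero.1 hprod).resolve_right (Nat.cast_ne_zero.2 (by omega)))
      · exact ⟨J3, fun t => (t.1.2.2 : ℂ), hJ3U, fun t => hJ3 _ _ _ t.2,
        fun heq => hn (Int.cast_injective heq)⟩
    · exact ⟨L3, fun t => (t.1.2.1 : ℂ), hL3U, fun t => hL3 _ _ _ t.2,
      fun heq => hm (Int.cast_injective heq)⟩
  obtain ⟨⟨⟨l, m, n⟩, h⟩, hmem⟩ :=
    (Module.Basis.mk hindep hspan.ge).exists_mem_of_separating (by rwa [Module.Basis.coe_mk]) hU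
  exact ⟨l, m, n, h, by simpa using hmem⟩

def IsC0 (Ψ : ℕ → ℤ → ℤ → V) (A : V →ₗ[ℂ] V) : Prop :=
  ∀ (l : ℕ) (m n : ℤ), InRange l m n →
    A (Ψ l m n) =
      ((Real.sqrt (((l:ℝ) - m + 1) * ((l:ℝ) + m + 1) * ((l:ℝ) - n + 1) * ((l:ℝ) + n + 1))
          / (2*(l:ℝ) + 3) : ℝ) : ℂ) • Ψ (l+1) m n
      + ((Real.sqrt (((l:ℝ) - m) * ((l:ℝ) + m) * ((l:ℝ) - n) * ((l:ℝ) + n))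
          / (2*(l:ℝ) - 1) : ℝ) : ℂ) • Ψ (l-1) m n

def IsC1p (Ψ : ℕ → ℤ → ℤ → V) (A : V →ₗ[ℂ] V) : Prop :=
  ∀ (l : ℕ) (m n : ℤ), InRange l m n →
    A (Ψ l m n) =
      (-(Real.sqrt (((l:ℝ) - m + 1) * ((l:ℝ) + m + 1) * ((l:ℝ) + n + 1) * ((l:ℝ) + n + 2))
          / (2*(l:ℝ) + 3) : ℝ) : ℂ) • Ψ (l+1) m (n+1)
      + ((Real.sqrt (((l:ℝ) - m) * ((l:ℝ) + m) * ((l:ℝ) - n) * ((l:ℝ) - n - 1))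
          / (2*(l:ℝ) - 1) : ℝ) : ℂ) • Ψ (l-1) m (n+1)

theorem IsC0.apply_zero_zero {C0 : V →ₗ[ℂ] V} (hC0 : IsC0 Ψ C0) (l : ℕ) :
    C0 (Ψ l 0 0) = (((l:ℂ) + 1) ^ 2 / (2 * l + 3)) • Ψ (l+1) 0 0
      + ((l:ℂ) ^ 2 / (2 * l - 1)) • Ψ (l-1) 0 0 := by
  have h₁ : √(((l:ℝ) + 1) * (l + 1) * (l + 1) * (l + 1)) = ((l:ℝ) + 1) ^ 2 :=
    (Real.sqrt_eq_iff_eq_sq (by positivity) (by positivity)).2 (by ring)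
  have h₂ : √((l:ℝ) * l * l * l) = (l:ℝ) ^ 2 :=
    (Real.sqrt_eq_iff_eq_sq (by positivity) (by positivity)).2 (by ring)
  simp only [hC0 l 0 0 (inRange_zero_zero l), Int.cast_zero, sub_zero, add_zero, h₁, h₂]
  push_cast
  rfl

theorem IsC1p.lowering_apply_zero_zero {C1p Jm : V →ₗ[ℂ] V} (hC1p : IsC1p Ψ C1p)
    (hJm : ∀ (l : ℕ) (m n : ℤ), InRange l m n →
      Jm (Ψ l m n) = (Real.sqrt (((l:ℝ) - n + 1) * ((l:ℝ) + n)) : ℂ) • Ψ l m (n-1)) (l : ℕ) :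
    Jm (C1p (Ψ l 0 0)) = (-((l:ℂ) + 2) * (((l:ℂ) + 1) ^ 2 / (2 * l + 3))) • Ψ (l+1) 0 0
      + (((l:ℂ) - 1) * ((l:ℂ) ^ 2 / (2 * l - 1))) • Ψ (l-1) 0 0 := by
  rw [hC1p l 0 0 (inRange_zero_zero l), map_add, map_smul, map_smul,
    hJm (l+1) 0 (0+1) ⟨by rw [abs_le]; omega, by rw [abs_le]; omega⟩, smul_smul]
  simp only [Int.cast_zero, Int.cast_one, zero_add, sub_zero, add_zero, sub_self, Nat.cast_add,
    Nat.cast_one]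
  congr 1
  · congr 1
    have key : ((√(((l:ℝ) + 1) * (l + 1) * (l + 1) * (l + 2)) : ℝ) : ℂ)
        * ((√(((l:ℝ) + 1 - 1 + 1) * (l + 1 + 1)) : ℝ) : ℂ) = ((l:ℂ) + 1) ^ 2 * (l + 2) := by
      rw [← Complex.ofReal_mul, Real.sqrt_mul_sqrt_eq (by positivity) (by positivity)
        (z := ((l:ℝ) + 1) ^ 2 * (l + 2)) (by ring)]
      push_cast
      ring
    push_cast
    linear_combination (-1 / (2 * (l:ℂ) + 3)) * key
  · rcases Nat.lt_or_ge l 2 with hl | hl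
    · -- the coefficient of the truncated index `Ψ (l-1) 0 1` vanishes
      interval_cases l <;> simp
    obtain ⟨k, rfl⟩ : ∃ k, l = k + 2 := ⟨l - 2, by omega⟩
    rw [show k + 2 - 1 = k + 1 from rfl,
      hJm (k+1) 0 1 ⟨by rw [abs_le]; omega, by rw [abs_le]; omega⟩, smul_smul]
    congr 1
    push_cast
    have key : ((√(((k:ℝ) + 2) * (k + 2) * (k + 2) * (k + 2 - 1)) : ℝ) : ℂ)
        * ((√(((k:ℝ) + 1 - 1 + 1) * (k + 1 + 1)) : ℝ) : ℂ) = ((k:ℂ) + 2) ^ 2 * (k + 1) := by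
      rw [← Complex.ofReal_mul, Real.sqrt_mul_sqrt_eq
        (mul_nonneg (by positivity) (by linarith [(Nat.cast_nonneg k : (0:ℝ) ≤ k)])) (by positivity)
        (z := ((k:ℝ) + 2) ^ 2 * (k + 1)) (by ring)]
      push_cast
      ring
    linear_combination (1 / (2 * ((k:ℂ) + 2) - 1)) * key

section LevelLadder

variable {C0 C1p Jm : V →ₗ[ℂ] V} (hC0 : IsC0 Ψ C0) (hC1p : IsC1p Ψ C1p)
  (hJm : ∀ (l : ℕ) (m n : ℤ), InRange l m n →
    Jm (Ψ l m n) = (Real.sqrt (((l:ℝ) - n + 1) * ((l:ℝ) + n)) : ℂ) • Ψ l m (n-1))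
  (hC0U : U ≤ U.comap C0) (hC1pU : U ≤ U.comap C1p) (hJmU : U ≤ U.comap Jm)
include hC0 hC1p hJm hC0U hC1pU hJmU

theorem succ_mem_of_mem {l : ℕ} (h : Ψ l 0 0 ∈ U) : Ψ (l+1) 0 0 ∈ U := by
  have hcomb : Jm (C1p (Ψ l 0 0)) - ((l:ℂ) - 1) • C0 (Ψ l 0 0)
      = (-((2 * (l:ℂ) + 1) * ((l + 1) ^ 2 / (2 * l + 3)))) • Ψ (l+1) 0 0 := by
    rw [hC1p.lowering_apply_zero_zero hJm, hC0.apply_zero_zero]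
    module
  have hc : -((2 * (l:ℂ) + 1) * ((l + 1) ^ 2 / (2 * l + 3))) ≠ 0 := by
    refine neg_ne_zero.2 (mul_ne_zero ?_ (div_ne_zero (pow_ne_zero _ ?_) ?_)) <;> norm_cast
  exact (U.smul_mem_iff hc).1 (hcomb ▸ U.sub_mem (hJmU (hC1pU h)) (U.smul_mem _ (hC0U h)))

theorem mem_of_succ_mem {l : ℕ} (h : Ψ (l+1) 0 0 ∈ U) : Ψ l 0 0 ∈ U := by
  have hcomb : Jm (C1p (Ψ (l+1) 0 0)) + ((l:ℂ) + 3) • C0 (Ψ (l+1) 0 0)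
      = ((2 * (l:ℂ) + 3) * ((l + 1) ^ 2 / (2 * l + 1))) • Ψ l 0 0 := by
    rw [hC1p.lowering_apply_zero_zero hJm, hC0.apply_zero_zero, Nat.add_sub_cancel]
    push_cast
    match_scalars
    · ring
    · field_simp
      ring
  have hc : (2 * (l:ℂ) + 3) * ((l + 1) ^ 2 / (2 * l + 1)) ≠ 0 := by
    refine mul_ne_zero ?_ (div_ne_zero (pow_ne_zero _ ?_) ?_) <;> norm_cast
  exact (U.smul_mem_iff hc).1 (hcomb ▸ U.add_mem (hJmU (hC1pU h)) (U.smul_mem _ (hC0U h)))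

theorem zero_zero_mem_of_mem {l₀ : ℕ} (h : Ψ l₀ 0 0 ∈ U) (l : ℕ) : Ψ l 0 0 ∈ U := by
  have h0 : Ψ 0 0 0 ∈ U := Nat.decreasingInduction
    (fun k _ hk => mem_of_succ_mem hC0 hC1p hJm hC0U hC1pU hJmU hk) h (Nat.zero_le l₀)
  induction l with
  | zero => exact h0
  | succ k ih => exact succ_mem_of_mem hC0 hC1p hJm hC0U hC1pU hJmU ih

end LevelLadder

end Ladder

theorem irreducible_general
    (V : Type*) [AddCommGroup V] [Module ℂ V]
    (Ψ : ℕ → ℤ → ℤ → V)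
    (hindep : LinearIndependent ℂ
      (fun t : {t : ℕ × ℤ × ℤ // InRange t.1 t.2.1 t.2.2} =>
        Ψ t.1.1 t.1.2.1 t.1.2.2))
    (hspan : Submodule.span ℂ
      (Set.range fun t : {t : ℕ × ℤ × ℤ // InRange t.1 t.2.1 t.2.2} =>
        Ψ t.1.1 t.1.2.1 t.1.2.2) = ⊤)
    (L3 J3 Lp Lm Jp Jm C0 C1p : V →ₗ[ℂ] V)
    (hL3 : ∀ (l : ℕ) (m n : ℤ), InRange l m n → L3 (Ψ l m n) = (m:ℂ) • Ψ l m n)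
    (hJ3 : ∀ (l : ℕ) (m n : ℤ), InRange l m n → J3 (Ψ l m n) = (n:ℂ) • Ψ l m n)
    (hLp : ∀ (l : ℕ) (m n : ℤ), InRange l m n →
      Lp (Ψ l m n) = (Real.sqrt (((l:ℝ) + m + 1) * ((l:ℝ) - m)) : ℂ) • Ψ l (m+1) n)
    (hLm : ∀ (l : ℕ) (m n : ℤ), InRange l m n →
      Lm (Ψ l m n) = (Real.sqrt (((l:ℝ) - m + 1) * ((l:ℝ) + m)) : ℂ) • Ψ l (m-1) n)
    (hJp : ∀ (l : ℕ) (m n : ℤ), InRange l m n →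
      Jp (Ψ l m n) = (Real.sqrt (((l:ℝ) + n + 1) * ((l:ℝ) - n)) : ℂ) • Ψ l m (n+1))
    (hJm : ∀ (l : ℕ) (m n : ℤ), InRange l m n →
      Jm (Ψ l m n) = (Real.sqrt (((l:ℝ) - n + 1) * ((l:ℝ) + n)) : ℂ) • Ψ l m (n-1))
    (hC0 : ∀ (l : ℕ) (m n : ℤ), InRange l m n →
      C0 (Ψ l m n) =
        ((Real.sqrt (((l:ℝ) - m + 1) * ((l:ℝ) + m + 1) * ((l:ℝ) - n + 1) * ((l:ℝ) + n + 1))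
            / (2*(l:ℝ) + 3) : ℝ) : ℂ) • Ψ (l+1) m n
        + ((Real.sqrt (((l:ℝ) - m) * ((l:ℝ) + m) * ((l:ℝ) - n) * ((l:ℝ) + n))
            / (2*(l:ℝ) - 1) : ℝ) : ℂ) • Ψ (l-1) m n)
    (hC1p : ∀ (l : ℕ) (m n : ℤ), InRange l m n →
      C1p (Ψ l m n) =
        (-(Real.sqrt (((l:ℝ) - m + 1) * ((l:ℝ) + m + 1) * ((l:ℝ) + n + 1) * ((l:ℝ) + n + 2))
            / (2*(l:ℝ) + 3) : ℝ) : ℂ) • Ψ (l+1) m (n+1)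
        + ((Real.sqrt (((l:ℝ) - m) * ((l:ℝ) + m) * ((l:ℝ) - n) * ((l:ℝ) - n - 1))
            / (2*(l:ℝ) - 1) : ℝ) : ℂ) • Ψ (l-1) m (n+1))
    (U : Submodule ℂ V)
    (hU : ∀ x ∈ U, L3 x ∈ U ∧ J3 x ∈ U ∧ Lp x ∈ U ∧ Lm x ∈ U ∧
        Jp x ∈ U ∧ Jm x ∈ U ∧ C0 x ∈ U ∧ C1p x ∈ U)
    (hne : U ≠ ⊥) :
    U = ⊤ := by
  have hL3U : U ≤ U.comap L3 := fun x hx => (hU x hx).1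
  have hJ3U : U ≤ U.comap J3 := fun x hx => (hU x hx).2.1
  have hLpU : U ≤ U.comap Lp := fun x hx => (hU x hx).2.2.1
  have hLmU : U ≤ U.comap Lm := fun x hx => (hU x hx).2.2.2.1
  have hJpU : U ≤ U.comap Jp := fun x hx => (hU x hx).2.2.2.2.1
  have hJmU : U ≤ U.comap Jm := fun x hx => (hU x hx).2.2.2.2.2.1
  have hC0U : U ≤ U.comap C0 := fun x hx => (hU x hx).2.2.2.2.2.2.1
  have hC1pU : U ≤ U.comap C1p := fun x hx => (hU x hx).2.2.2.2.2.2.2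
  -- `J±` act on the last index as `L±` act on the middle one
  have level : ∀ {l : ℕ} {m n m' n' : ℤ}, InRange l m n → InRange l m' n' →
      Ψ l m n ∈ U → Ψ l m' n' ∈ U :=
    mem_of_mem_same_level hLp hLm (fun l m n h => hJp l n m h.swap)
      (fun l m n h => hJm l n m h.swap) hLpU hLmU hJpU hJmU
  obtain ⟨l₀, m₀, n₀, h₀, hmem⟩ :=
    exists_inRange_mem hindep hspan hL3 hJ3 hLp hLm hL3U hJ3U hLpU hLmU hne
  have h00 : ∀ l, Ψ l 0 0 ∈ U := zero_zero_mem_of_mem hC0 hC1p hJm hC0U hC1pU hJmU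
    (level h₀ (inRange_zero_zero l₀) hmem)
  rw [eq_top_iff, ← hspan, Submodule.span_le]
  rintro _ ⟨⟨⟨l, m, n⟩, h⟩, rfl⟩
  exact level (inRange_zero_zero l) h (h00 l)

/-- Irreducibility of the `o(3,3)` observable representation on the physical state
space `V = span{Ψ_{lmn}}`: any nonzero invariant subspace is everything. -/
theorem irreducible
    (V : Type*) [AddCommGroup V] [Module ℂ V]
    (Ψ : ℕ → ℤ → ℤ → V)
    (hzero : ∀ (l : ℕ) (m n : ℤ), ¬ InRange l m n → Ψ l m n = 0)
    (hindep : LinearIndependent ℂ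
      (fun t : {t : ℕ × ℤ × ℤ // InRange t.1 t.2.1 t.2.2} =>
        Ψ t.1.1 t.1.2.1 t.1.2.2))
    (hspan : Submodule.span ℂ
      (Set.range fun t : {t : ℕ × ℤ × ℤ // InRange t.1 t.2.1 t.2.2} =>
        Ψ t.1.1 t.1.2.1 t.1.2.2) = ⊤)
    (L3 J3 Lp Lm Jp Jm C0 C1p : V →ₗ[ℂ] V)
    (hL3 : ∀ (l : ℕ) (m n : ℤ), InRange l m n → L3 (Ψ l m n) = (m:ℂ) • Ψ l m n)
    (hJ3 : ∀ (l : ℕ) (m n : ℤ), InRange l m n → J3 (Ψ l m n) = (n:ℂ) • Ψ l m n)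
    (hLp : ∀ (l : ℕ) (m n : ℤ), InRange l m n →
      Lp (Ψ l m n) = (Real.sqrt (((l:ℝ) + m + 1) * ((l:ℝ) - m)) : ℂ) • Ψ l (m+1) n)
    (hLm : ∀ (l : ℕ) (m n : ℤ), InRange l m n →
      Lm (Ψ l m n) = (Real.sqrt (((l:ℝ) - m + 1) * ((l:ℝ) + m)) : ℂ) • Ψ l (m-1) n)
    (hJp : ∀ (l : ℕ) (m n : ℤ), InRange l m n →
      Jp (Ψ l m n) = (Real.sqrt (((l:ℝ) + n + 1) * ((l:ℝ) - n)) : ℂ) • Ψ l m (n+1))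
    (hJm : ∀ (l : ℕ) (m n : ℤ), InRange l m n →
      Jm (Ψ l m n) = (Real.sqrt (((l:ℝ) - n + 1) * ((l:ℝ) + n)) : ℂ) • Ψ l m (n-1))
    (hC0 : ∀ (l : ℕ) (m n : ℤ), InRange l m n →
      C0 (Ψ l m n) =
        ((Real.sqrt (((l:ℝ) - m + 1) * ((l:ℝ) + m + 1) * ((l:ℝ) - n + 1) * ((l:ℝ) + n + 1))
            / (2*(l:ℝ) + 3) : ℝ) : ℂ) • Ψ (l+1) m n
        + ((Real.sqrt (((l:ℝ) - m) * ((l:ℝ) + m) * ((l:ℝ) - n) * ((l:ℝ) + n))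
            / (2*(l:ℝ) - 1) : ℝ) : ℂ) • Ψ (l-1) m n)
    (hC1p : ∀ (l : ℕ) (m n : ℤ), InRange l m n →
      C1p (Ψ l m n) =
        (-(Real.sqrt (((l:ℝ) - m + 1) * ((l:ℝ) + m + 1) * ((l:ℝ) + n + 1) * ((l:ℝ) + n + 2))
            / (2*(l:ℝ) + 3) : ℝ) : ℂ) • Ψ (l+1) m (n+1)
        + ((Real.sqrt (((l:ℝ) - m) * ((l:ℝ) + m) * ((l:ℝ) - n) * ((l:ℝ) - n - 1))
            / (2*(l:ℝ) - 1) : ℝ) : ℂ) • Ψ (l-1) m (n+1))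
    (U : Submodule ℂ V)
    (hU : ∀ x ∈ U, L3 x ∈ U ∧ J3 x ∈ U ∧ Lp x ∈ U ∧ Lm x ∈ U ∧
        Jp x ∈ U ∧ Jm x ∈ U ∧ C0 x ∈ U ∧ C1p x ∈ U)
    (hne : U ≠ ⊥) :
    U = ⊤ :=
  irreducible_general V Ψ hindep hspan L3 J3 Lp Lm Jp Jm C0 C1p hL3 hJ3 hLp hLm hJp hJm hC0 hC1p U
    hU hne

end Stmt14
end

section
/- Let V be as above and suppose (·,·) is an inner product on V in which L₃, J₃, C₀ and L² := L₃² + (1/2)(L₊L₋+L₋L₊) are symmetric and (L±)* = L∓, (J±)* = J∓. Then there is a positive constant r with (Ψ_{lmn}, Ψ_{l'm'n'}) = r(2l+1) δ_{ll'} δ_{mm'} δ_{nn'}. -/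
/-!
Orthogonality comes from symmetry: distinct eigenvalues of the symmetric operators `L₃`, `J₃`
and of the Casimir `L²` (eigenvalue `l(l+1)`) separate the indices `m`, `n` and `l`. Since
`(L₊)* = L₋`, the ladder step `Ψ_{lmn} ↦ Ψ_{l,m+1,n}` preserves the norm, and likewise for `J±`,
so `(Ψ_{lmn}, Ψ_{lmn}) = (Ψ_{l00}, Ψ_{l00})`. Finally, symmetry of `C₀` between `Ψ_{l00}` and
`Ψ_{l+1,0,0}`, whose cross terms vanish by orthogonality in `l`, gives
`(l+1)²/(2l+1) (Ψ_{l00}, Ψ_{l00}) = (l+1)²/(2l+3) (Ψ_{l+1,0,0}, Ψ_{l+1,0,0})`, hence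
`(Ψ_{l00}, Ψ_{l00}) = (2l+1) (Ψ_{000}, Ψ_{000})`.
-/

namespace Stmt15

def InRange (l : ℕ) (m n : ℤ) : Prop := |m| ≤ (l:ℤ) ∧ |n| ≤ (l:ℤ)

section Form

variable {V : Type*} [AddCommGroup V] [Module ℂ V] (B : V →ₗ⋆[ℂ] V →ₗ[ℂ] ℂ)

theorem form_eq_zero_of_eigenvalue_ne {T : V →ₗ[ℂ] V} (hT : ∀ x y, B (T x) y = B x (T y))
    {a b : ℝ} {x y : V} (hx : T x = (a : ℂ) • x) (hy : T y = (b : ℂ) • y) (hab : a ≠ b) :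
    B x y = 0 := by
  have h := hT x y
  simp only [hx, hy, LinearMap.map_smulₛₗ₂, map_smul, smul_eq_mul, Complex.conj_ofReal] at h
  have hab' : (a : ℂ) - b ≠ 0 := sub_ne_zero.mpr (by exact_mod_cast hab)
  exact (mul_eq_zero.mp (by linear_combination h : ((a : ℂ) - b) * B x y = 0)).resolve_left hab'

theorem form_self_eq_of_ladder_step {S T : V →ₗ[ℂ] V} (hST : ∀ x y, B (S x) y = B x (T y))
    {c : ℝ} (hc : c ≠ 0) {x y : V} (hx : S x = (c : ℂ) • y) (hy : T y = (c : ℂ) • x) :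
    B y y = B x x := by
  have h := hST x y
  simp only [hx, hy, LinearMap.map_smulₛₗ₂, map_smul, smul_eq_mul, Complex.conj_ofReal] at h
  exact mul_left_cancel₀ (Complex.ofReal_ne_zero.mpr hc) h

theorem mul_form_self_eq_of_symm {C : V →ₗ[ℂ] V} (hC : ∀ x y, B (C x) y = B x (C y))
    {a b : ℝ} {x y u w : V} (hx : C x = (a : ℂ) • y + u) (hy : C y = w + (b : ℂ) • x)
    (hu : B u y = 0) (hw : B x w = 0) : a * B y y = b * B x x := by
  have h := hC x y
  simp only [hx, hy, map_add, LinearMap.add_apply, LinearMap.map_smulₛₗ₂, map_smul, smul_eq_mul,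
    Complex.conj_ofReal, hu, hw, add_zero, zero_add] at h
  exact h

end Form

theorem eq_of_succ_eq_of_mem_Icc {α : Type*} {f : ℤ → α} {a b : ℤ}
    (h : ∀ k, a ≤ k → k < b → f (k + 1) = f k) {m n : ℤ} (hm : m ∈ Set.Icc a b)
    (hn : n ∈ Set.Icc a b) : f m = f n := by
  suffices key : ∀ k (hk : a ≤ k), k ≤ b → f k = f a from
    (key m hm.1 hm.2).trans (key n hn.1 hn.2).symm
  intro k hk
  induction k, hk using Int.leInduction with
  | base => exact fun _ => rfl
  | succ k hk ih => exact fun hkb => (h k hk (by omega)).trans (ih (by omega))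

theorem eq_two_mul_add_one_mul_zero {N : ℕ → ℂ}
    (h : ∀ l : ℕ, (2 * l + 1) * N (l + 1) = (2 * l + 3) * N l) (l : ℕ) :
    N l = (2 * l + 1) * N 0 := by
  induction l with
  | zero => simp
  | succ k ih =>
    have hk : (2 * k + 1 : ℂ) ≠ 0 := by exact_mod_cast (by omega : 2 * k + 1 ≠ 0)
    refine mul_left_cancel₀ hk ?_
    rw [h k, ih]
    push_cast
    ring

section Ladder

variable {V : Type*} [AddCommGroup V] [Module ℂ V]

noncomputable def casimir (L3 Lp Lm : V →ₗ[ℂ] V) : V →ₗ[ℂ] V :=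
  (L3 ∘ₗ L3) + (1/2 : ℂ) • ((Lp ∘ₗ Lm) + (Lm ∘ₗ Lp))

structure SpinLadder (l : ℕ) (L3 Lp Lm : V →ₗ[ℂ] V) (φ : ℤ → V) : Prop where
  diag : ∀ k : ℤ, |k| ≤ l → L3 (φ k) = (k : ℂ) • φ k
  raise : ∀ k : ℤ, |k| ≤ l →
    Lp (φ k) = (Real.sqrt (((l:ℝ) + k + 1) * ((l:ℝ) - k)) : ℂ) • φ (k + 1)
  lower : ∀ k : ℤ, |k| ≤ l →
    Lm (φ k) = (Real.sqrt (((l:ℝ) - k + 1) * ((l:ℝ) + k)) : ℂ) • φ (k - 1)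

namespace SpinLadder

variable {l : ℕ} {L3 Lp Lm : V →ₗ[ℂ] V} {φ : ℤ → V}

theorem reflect (h : SpinLadder l L3 Lp Lm φ) : SpinLadder l (-L3) Lm Lp (fun k => φ (-k)) where
  diag k hk := by
    rw [LinearMap.neg_apply, h.diag (-k) (by rwa [abs_neg]), ← neg_smul]
    push_cast
    ring_nf
  raise k hk := by
    rw [h.lower (-k) (by rwa [abs_neg]), neg_sub_left, add_comm 1 k]
    push_cast
    ring_nf
  lower k hk := by
    rw [h.raise (-k) (by rwa [abs_neg]), neg_add_eq_sub, ← neg_sub k 1]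
    push_cast
    ring_nf

theorem raise_lower (h : SpinLadder l L3 Lp Lm φ) {k : ℤ} (hk : |k| ≤ l) :
    Lp (Lm (φ k)) = ((((l:ℝ) - k + 1) * ((l:ℝ) + k) : ℝ) : ℂ) • φ k := by
  obtain ⟨hlo, hhi⟩ := abs_le.mp hk
  rw [h.lower k hk, map_smul]
  rcases eq_or_lt_of_le hlo with rfl | hlo
  · simp
  rw [h.raise (k - 1) (abs_le.mpr ⟨by omega, by omega⟩), sub_add_cancel, smul_smul,
    ← Complex.ofReal_mul]
  have hlo' : -(l:ℝ) < k := by exact_mod_cast hlo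
  have hhi' : (k:ℝ) ≤ l := by exact_mod_cast hhi
  congr 2
  push_cast
  rw [← Real.sqrt_mul (by nlinarith), show ((l:ℝ) + (k - 1) + 1) * (l - (k - 1))
    = ((l:ℝ) - k + 1) * (l + k) by ring, Real.sqrt_mul_self (by nlinarith)]

theorem lower_raise (h : SpinLadder l L3 Lp Lm φ) {k : ℤ} (hk : |k| ≤ l) :
    Lm (Lp (φ k)) = ((((l:ℝ) + k + 1) * ((l:ℝ) - k) : ℝ) : ℂ) • φ k := by
  have hrefl := h.reflect.raise_lower (k := -k) (by rwa [abs_neg])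
  simp only [neg_neg] at hrefl
  rw [hrefl]
  push_cast
  ring_nf

theorem casimir_apply (h : SpinLadder l L3 Lp Lm φ) {k : ℤ} (hk : |k| ≤ l) :
    casimir L3 Lp Lm (φ k) = (((l:ℝ) * ((l:ℝ) + 1) : ℝ) : ℂ) • φ k := by
  simp only [casimir, LinearMap.add_apply, LinearMap.comp_apply, LinearMap.smul_apply,
    h.raise_lower hk, h.lower_raise hk, h.diag k hk, map_smul, smul_smul, ← add_smul]
  congr 1
  push_cast
  ring

theorem form_self_eq (h : SpinLadder l L3 Lp Lm φ) (B : V →ₗ⋆[ℂ] V →ₗ[ℂ] ℂ)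
    (hadj : ∀ x y, B (Lp x) y = B x (Lm y)) {k : ℤ} (hk : |k| ≤ l) :
    B (φ k) (φ k) = B (φ 0) (φ 0) := by
  refine eq_of_succ_eq_of_mem_Icc (f := fun k => B (φ k) (φ k)) (a := -l) (b := l) ?_
    (abs_le.mp hk) ⟨by omega, by omega⟩
  intro j hlo hhi
  have hlo' : -(l:ℝ) ≤ j := by exact_mod_cast hlo
  have hhi' : (j:ℝ) + 1 ≤ l := by exact_mod_cast hhi
  refine form_self_eq_of_ladder_step B hadj (Real.sqrt_pos.mpr (by nlinarith)).ne'
    (h.raise j (abs_le.mpr ⟨hlo, hhi.le⟩)) ?_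
  rw [h.lower (j + 1) (abs_le.mpr ⟨by omega, hhi⟩), add_sub_cancel_right]
  push_cast
  ring_nf

variable (B : V →ₗ⋆[ℂ] V →ₗ[ℂ] ℂ) {l' : ℕ} {ψ : ℤ → V}

theorem form_eq_zero_of_index_ne (h : SpinLadder l L3 Lp Lm φ) (h' : SpinLadder l' L3 Lp Lm ψ)
    (hsym : ∀ x y, B (L3 x) y = B x (L3 y)) {k k' : ℤ} (hk : |k| ≤ l) (hk' : |k'| ≤ l')
    (hne : k ≠ k') : B (φ k) (ψ k') = 0 :=
  form_eq_zero_of_eigenvalue_ne B hsym (a := k) (b := k') (by exact_mod_cast h.diag k hk)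
    (by exact_mod_cast h'.diag k' hk') (mod_cast hne)

theorem form_eq_zero_of_ne (h : SpinLadder l L3 Lp Lm φ) (h' : SpinLadder l' L3 Lp Lm ψ)
    (hsym : ∀ x y, B (casimir L3 Lp Lm x) y = B x (casimir L3 Lp Lm y)) {k k' : ℤ}
    (hk : |k| ≤ l) (hk' : |k'| ≤ l') (hne : l ≠ l') : B (φ k) (ψ k') = 0 := by
  refine form_eq_zero_of_eigenvalue_ne B hsym (h.casimir_apply hk) (h'.casimir_apply hk')
    fun e => hne ?_
  have hfac : ((l:ℝ) - l') * (l + l' + 1) = 0 := by linear_combination e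
  exact_mod_cast sub_eq_zero.mp ((mul_eq_zero.mp hfac).resolve_right (by positivity))

end SpinLadder

end Ladder

theorem sqrt_mul_self_mul_self_mul_self (x : ℝ) : √(x * x * x * x) = x ^ 2 := by
  rw [show x * x * x * x = (x ^ 2) ^ 2 by ring, Real.sqrt_sq (sq_nonneg x)]

theorem inRange_zero_zero (l : ℕ) : InRange l 0 0 := ⟨by simp, by simp⟩

theorem two_mul_add_one_mul_form_succ {V : Type*} [AddCommGroup V] [Module ℂ V]
    (B : V →ₗ⋆[ℂ] V →ₗ[ℂ] ℂ) {C : V →ₗ[ℂ] V} (hC : ∀ x y, B (C x) y = B x (C y))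
    {φ : ℕ → V}
    -- at `l = 0` the truncated `φ (l - 1)` is `φ 0`, but its coefficient vanishes
    (hφ : ∀ l : ℕ, C (φ l) = ((((l:ℝ) + 1) ^ 2 / (2 * l + 3) : ℝ) : ℂ) • φ (l + 1)
      + (((l:ℝ) ^ 2 / (2 * l - 1) : ℝ) : ℂ) • φ (l - 1))
    (horth : ∀ l l', l ≠ l' → B (φ l) (φ l') = 0) (l : ℕ) :
    (2 * l + 1) * B (φ (l + 1)) (φ (l + 1)) = (2 * l + 3) * B (φ l) (φ l) := by
  have hy := hφ (l + 1)
  rw [Nat.add_sub_cancel] at hy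
  have key := mul_form_self_eq_of_symm B hC (hφ l) hy
    (by simp [horth (l - 1) (l + 1) (by omega)]) (by simp [horth l (l + 1 + 1) (by omega)])
  have h1 : (2 * l + 1 : ℂ) ≠ 0 := by exact_mod_cast (by omega : 2 * l + 1 ≠ 0)
  have h3 : (2 * l + 3 : ℂ) ≠ 0 := by exact_mod_cast (by omega : 2 * l + 3 ≠ 0)
  have hl : ((l:ℂ) + 1) ^ 2 ≠ 0 := pow_ne_zero 2 (by exact_mod_cast l.succ_ne_zero)
  push_cast at key
  rw [show 2 * ((l:ℂ) + 1) - 1 = 2 * l + 1 by ring] at key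
  rw [div_mul_eq_mul_div, div_mul_eq_mul_div, div_eq_div_iff h3 h1] at key
  exact mul_left_cancel₀ hl (by linear_combination key)

theorem inner_product_unique_general
    (V : Type*) [AddCommGroup V] [Module ℂ V]
    (Ψ : ℕ → ℤ → ℤ → V)
    (hindep : LinearIndependent ℂ
      (fun t : {t : ℕ × ℤ × ℤ // InRange t.1 t.2.1 t.2.2} =>
        Ψ t.1.1 t.1.2.1 t.1.2.2))
    (L3 J3 Lp Lm Jp Jm C0 : V →ₗ[ℂ] V)
    (hL3 : ∀ (l : ℕ) (m n : ℤ), InRange l m n → L3 (Ψ l m n) = (m:ℂ) • Ψ l m n)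
    (hJ3 : ∀ (l : ℕ) (m n : ℤ), InRange l m n → J3 (Ψ l m n) = (n:ℂ) • Ψ l m n)
    (hLp : ∀ (l : ℕ) (m n : ℤ), InRange l m n →
      Lp (Ψ l m n) = (Real.sqrt (((l:ℝ) + m + 1) * ((l:ℝ) - m)) : ℂ) • Ψ l (m+1) n)
    (hLm : ∀ (l : ℕ) (m n : ℤ), InRange l m n →
      Lm (Ψ l m n) = (Real.sqrt (((l:ℝ) - m + 1) * ((l:ℝ) + m)) : ℂ) • Ψ l (m-1) n)
    (hJp : ∀ (l : ℕ) (m n : ℤ), InRange l m n →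
      Jp (Ψ l m n) = (Real.sqrt (((l:ℝ) + n + 1) * ((l:ℝ) - n)) : ℂ) • Ψ l m (n+1))
    (hJm : ∀ (l : ℕ) (m n : ℤ), InRange l m n →
      Jm (Ψ l m n) = (Real.sqrt (((l:ℝ) - n + 1) * ((l:ℝ) + n)) : ℂ) • Ψ l m (n-1))
    (hC0 : ∀ (l : ℕ) (m n : ℤ), InRange l m n →
      C0 (Ψ l m n) =
        ((Real.sqrt (((l:ℝ) - m + 1) * ((l:ℝ) + m + 1) * ((l:ℝ) - n + 1) * ((l:ℝ) + n + 1))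
            / (2*(l:ℝ) + 3) : ℝ) : ℂ) • Ψ (l+1) m n
        + ((Real.sqrt (((l:ℝ) - m) * ((l:ℝ) + m) * ((l:ℝ) - n) * ((l:ℝ) + n))
            / (2*(l:ℝ) - 1) : ℝ) : ℂ) • Ψ (l-1) m n)
    -- an inner product: Hermitian sesquilinear, conjugate-linear in the first slot,
    -- positive definite
    (B : V → V → ℂ)
    (hadd1 : ∀ x y z, B (x + y) z = B x z + B y z)
    (hadd2 : ∀ x y z, B x (y + z) = B x y + B x z)
    (hsmul1 : ∀ (a : ℂ) x y, B (a • x) y = (starRingEnd ℂ) a * B x y)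
    (hsmul2 : ∀ (a : ℂ) x y, B x (a • y) = a * B x y)
    (hherm : ∀ x y, B x y = (starRingEnd ℂ) (B y x))
    (hpos : ∀ x, x ≠ 0 → 0 < (B x x).re)
    -- symmetry and adjointness relations
    (hsymL3 : ∀ x y, B (L3 x) y = B x (L3 y))
    (hsymJ3 : ∀ x y, B (J3 x) y = B x (J3 y))
    (hsymC0 : ∀ x y, B (C0 x) y = B x (C0 y))
    (hsymL2 : ∀ x y,
      B (((L3 ∘ₗ L3) + (1/2 : ℂ) • ((Lp ∘ₗ Lm) + (Lm ∘ₗ Lp))) x) y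
        = B x (((L3 ∘ₗ L3) + (1/2 : ℂ) • ((Lp ∘ₗ Lm) + (Lm ∘ₗ Lp))) y))
    (hadjL : ∀ x y, B (Lp x) y = B x (Lm y))
    (hadjJ : ∀ x y, B (Jp x) y = B x (Jm y)) :
    ∃ r : ℝ, 0 < r ∧
      ∀ (l : ℕ) (m n : ℤ) (l' : ℕ) (m' n' : ℤ),
        InRange l m n → InRange l' m' n' →
        B (Ψ l m n) (Ψ l' m' n')
          = if l = l' ∧ m = m' ∧ n = n' then ((r * (2*(l:ℝ) + 1) : ℝ) : ℂ) else 0 := by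
  let B' : V →ₗ⋆[ℂ] V →ₗ[ℂ] ℂ := LinearMap.mk₂'ₛₗ _ _ B hadd1 hsmul1 hadd2 hsmul2
  have hL (l : ℕ) (n : ℤ) (hn : |n| ≤ l) : SpinLadder l L3 Lp Lm (Ψ l · n) :=
    ⟨fun m hm => hL3 l m n ⟨hm, hn⟩, fun m hm => hLp l m n ⟨hm, hn⟩,
      fun m hm => hLm l m n ⟨hm, hn⟩⟩
  have hJ (l : ℕ) (m : ℤ) (hm : |m| ≤ l) : SpinLadder l J3 Jp Jm (Ψ l m) :=
    ⟨fun n hn => hJ3 l m n ⟨hm, hn⟩, fun n hn => hJp l m n ⟨hm, hn⟩,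
      fun n hn => hJm l m n ⟨hm, hn⟩⟩
  have orth_l {l m n l' m' n'} (h : InRange l m n) (h' : InRange l' m' n') (hl : l ≠ l') :
      B (Ψ l m n) (Ψ l' m' n') = 0 :=
    (hL l n h.2).form_eq_zero_of_ne B' (hL l' n' h'.2) hsymL2 h.1 h'.1 hl
  have hC0_zero (l : ℕ) :
      C0 (Ψ l 0 0) = ((((l:ℝ) + 1) ^ 2 / (2 * l + 3) : ℝ) : ℂ) • Ψ (l + 1) 0 0
        + (((l:ℝ) ^ 2 / (2 * l - 1) : ℝ) : ℂ) • Ψ (l - 1) 0 0 := by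
    rw [hC0 l 0 0 (inRange_zero_zero l)]
    simp only [Int.cast_zero, sub_zero, add_zero]
    rw [sqrt_mul_self_mul_self_mul_self, sqrt_mul_self_mul_self_mul_self]
  have hN := eq_two_mul_add_one_mul_zero (N := fun l => B (Ψ l 0 0) (Ψ l 0 0))
    (two_mul_add_one_mul_form_succ B' hsymC0 hC0_zero fun l l' =>
      orth_l (inRange_zero_zero l) (inRange_zero_zero l'))
  have hreal : ((B (Ψ 0 0 0) (Ψ 0 0 0)).re : ℂ) = B (Ψ 0 0 0) (Ψ 0 0 0) :=
    Complex.conj_eq_iff_re.mp (hherm _ _).symm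
  refine ⟨(B (Ψ 0 0 0) (Ψ 0 0 0)).re,
    hpos _ (hindep.ne_zero ⟨(0, 0, 0), inRange_zero_zero 0⟩), fun l m n l' m' n' h h' => ?_⟩
  split_ifs with heq
  · obtain ⟨rfl, rfl, rfl⟩ := heq
    calc B (Ψ l m n) (Ψ l m n) = B (Ψ l 0 0) (Ψ l 0 0) :=
          ((hL l n h.2).form_self_eq B' hadjL h.1).trans
            ((hJ l 0 (by simp)).form_self_eq B' hadjJ h.2)
      _ = _ := by
          rw [hN, Complex.ofReal_mul, hreal]
          push_cast
          ring
  obtain hl | hm | hn : l ≠ l' ∨ m ≠ m' ∨ n ≠ n' := by tauto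
  · exact orth_l h h' hl
  · exact (hL l n h.2).form_eq_zero_of_index_ne B' (hL l' n' h'.2) hsymL3 h.1 h'.1 hm
  · exact (hJ l m h.1).form_eq_zero_of_index_ne B' (hJ l' m' h'.1) hsymJ3 h.2 h'.2 hn

/-- Uniqueness of the inner product on the `p = q = 3` physical state space: any
inner product in which `L₃, J₃, C₀, L²` are symmetric and `(L±)* = L∓`, `(J±)* = J∓`
is a positive multiple of `(Ψ_{lmn}, Ψ_{l'm'n'}) = (2l+1)δ_{ll'}δ_{mm'}δ_{nn'}`. -/
theorem inner_product_unique
    (V : Type*) [AddCommGroup V] [Module ℂ V]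
    (Ψ : ℕ → ℤ → ℤ → V)
    (hzero : ∀ (l : ℕ) (m n : ℤ), ¬ InRange l m n → Ψ l m n = 0)
    (hindep : LinearIndependent ℂ
      (fun t : {t : ℕ × ℤ × ℤ // InRange t.1 t.2.1 t.2.2} =>
        Ψ t.1.1 t.1.2.1 t.1.2.2))
    (hspan : Submodule.span ℂ
      (Set.range fun t : {t : ℕ × ℤ × ℤ // InRange t.1 t.2.1 t.2.2} =>
        Ψ t.1.1 t.1.2.1 t.1.2.2) = ⊤)
    (L3 J3 Lp Lm Jp Jm C0 : V →ₗ[ℂ] V)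
    (hL3 : ∀ (l : ℕ) (m n : ℤ), InRange l m n → L3 (Ψ l m n) = (m:ℂ) • Ψ l m n)
    (hJ3 : ∀ (l : ℕ) (m n : ℤ), InRange l m n → J3 (Ψ l m n) = (n:ℂ) • Ψ l m n)
    (hLp : ∀ (l : ℕ) (m n : ℤ), InRange l m n →
      Lp (Ψ l m n) = (Real.sqrt (((l:ℝ) + m + 1) * ((l:ℝ) - m)) : ℂ) • Ψ l (m+1) n)
    (hLm : ∀ (l : ℕ) (m n : ℤ), InRange l m n →
      Lm (Ψ l m n) = (Real.sqrt (((l:ℝ) - m + 1) * ((l:ℝ) + m)) : ℂ) • Ψ l (m-1) n)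
    (hJp : ∀ (l : ℕ) (m n : ℤ), InRange l m n →
      Jp (Ψ l m n) = (Real.sqrt (((l:ℝ) + n + 1) * ((l:ℝ) - n)) : ℂ) • Ψ l m (n+1))
    (hJm : ∀ (l : ℕ) (m n : ℤ), InRange l m n →
      Jm (Ψ l m n) = (Real.sqrt (((l:ℝ) - n + 1) * ((l:ℝ) + n)) : ℂ) • Ψ l m (n-1))
    (hC0 : ∀ (l : ℕ) (m n : ℤ), InRange l m n →
      C0 (Ψ l m n) =
        ((Real.sqrt (((l:ℝ) - m + 1) * ((l:ℝ) + m + 1) * ((l:ℝ) - n + 1) * ((l:ℝ) + n + 1))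
            / (2*(l:ℝ) + 3) : ℝ) : ℂ) • Ψ (l+1) m n
        + ((Real.sqrt (((l:ℝ) - m) * ((l:ℝ) + m) * ((l:ℝ) - n) * ((l:ℝ) + n))
            / (2*(l:ℝ) - 1) : ℝ) : ℂ) • Ψ (l-1) m n)
    -- an inner product: Hermitian sesquilinear, conjugate-linear in the first slot,
    -- positive definite
    (B : V → V → ℂ)
    (hadd1 : ∀ x y z, B (x + y) z = B x z + B y z)
    (hadd2 : ∀ x y z, B x (y + z) = B x y + B x z)
    (hsmul1 : ∀ (a : ℂ) x y, B (a • x) y = (starRingEnd ℂ) a * B x y)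
    (hsmul2 : ∀ (a : ℂ) x y, B x (a • y) = a * B x y)
    (hherm : ∀ x y, B x y = (starRingEnd ℂ) (B y x))
    (hpos : ∀ x, x ≠ 0 → 0 < (B x x).re)
    -- symmetry and adjointness relations
    (hsymL3 : ∀ x y, B (L3 x) y = B x (L3 y))
    (hsymJ3 : ∀ x y, B (J3 x) y = B x (J3 y))
    (hsymC0 : ∀ x y, B (C0 x) y = B x (C0 y))
    (hsymL2 : ∀ x y,
      B (((L3 ∘ₗ L3) + (1/2 : ℂ) • ((Lp ∘ₗ Lm) + (Lm ∘ₗ Lp))) x) y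
        = B x (((L3 ∘ₗ L3) + (1/2 : ℂ) • ((Lp ∘ₗ Lm) + (Lm ∘ₗ Lp))) y))
    (hadjL : ∀ x y, B (Lp x) y = B x (Lm y))
    (hadjJ : ∀ x y, B (Jp x) y = B x (Jm y)) :
    ∃ r : ℝ, 0 < r ∧
      ∀ (l : ℕ) (m n : ℤ) (l' : ℕ) (m' n' : ℤ),
        InRange l m n → InRange l' m' n' →
        B (Ψ l m n) (Ψ l' m' n')
          = if l = l' ∧ m = m' ∧ n = n' then ((r * (2*(l:ℝ) + 1) : ℝ) : ℂ) else 0 :=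
  inner_product_unique_general V Ψ hindep L3 J3 Lp Lm Jp Jm C0 hL3 hJ3 hLp hLm hJp hJm hC0 B hadd1
    hadd2 hsmul1 hsmul2 hherm hpos hsymL3 hsymJ3 hsymC0 hsymL2 hadjL hadjJ

end Stmt15
end

section
/- Let l̃, j̃ > −1 with l̃ + j̃ > 0, and let r, s, r', s' be nonnegative integers. Then the function F(z, μ) = z^{(l̃+j̃)/2 + 1 + s + r'} (1 + μ²z²)^{(s'−s)/2} / [(z+1)² + μ²z²]^{1 + (l̃+j̃+r+r'+s+s')/2} is integrable over (z,μ) ∈ (0,∞) × ℝ provided l̃ + j̃ + 2r + 2s > 0 and l̃ + j̃ + 1 + r + 2s > 0. -/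
/-!
With `D = (z+1)² + μ²z²`, bound `(1+μ²z²)^((s'-s)/2) ≤ D^(s'/2)` and then every power of `D`
but one by the same power of `(z+1)² ≤ D`: the integrand is dominated by `z^p (z+1)^c / D` with
`p > 0` and `p + c = 1 - (l̃+j̃)/2 - r < 1`. Since `∫ dμ / D = π / (z(z+1))`, Tonelli reduces the
integrability of the majorant to that of `z^(p-1) (z+1)^(c-1)` on `(0,∞)`, which holds near `0`
because `p - 1 > -1` and at infinity because `p + c - 2 < -1`.
-/

namespace Stmt17

open MeasureTheory Set Real

lemma rpow_le_rpow_of_one_le_of_le {A D e t : ℝ} (hA : 1 ≤ A) (hAD : A ≤ D) (het : e ≤ t)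
    (ht : 0 ≤ t) : A ^ e ≤ D ^ t :=
  (rpow_le_rpow_of_exponent_le hA het).trans (rpow_le_rpow (by linarith) hAD ht)

lemma rpow_le_rpow_add_one_mul_inv {B D k : ℝ} (hB : 0 < B) (hBD : B ≤ D) (hk : k ≤ -1) :
    D ^ k ≤ B ^ (k + 1) * D⁻¹ := by
  have hD : 0 < D := hB.trans_le hBD
  calc D ^ k = D ^ (k + 1) * D⁻¹ := by rw [rpow_add_one hD.ne', mul_inv_cancel_right₀ hD.ne']
    _ ≤ B ^ (k + 1) * D⁻¹ := by
      gcongr ?_ * _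
      exact rpow_le_rpow_of_nonpos hB hBD (by linarith)

lemma inv_sq_add_sq_mul_sq_eq {a b : ℝ} (ha : 0 < a) (μ : ℝ) :
    (a ^ 2 + μ ^ 2 * b ^ 2)⁻¹ = (a ^ 2)⁻¹ * (1 + (b / a * μ) ^ 2)⁻¹ := by
  rw [← mul_inv]
  field_simp

lemma integrable_inv_sq_add_sq_mul_sq {a b : ℝ} (ha : 0 < a) (hb : 0 < b) :
    Integrable fun μ : ℝ => (a ^ 2 + μ ^ 2 * b ^ 2)⁻¹ := by
  simp_rw [inv_sq_add_sq_mul_sq_eq ha]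
  exact ((integrable_comp_mul_left_iff (fun x : ℝ => (1 + x ^ 2)⁻¹)
    (div_pos hb ha).ne').mpr integrable_inv_one_add_sq).const_mul _

lemma integral_inv_sq_add_sq_mul_sq {a b : ℝ} (ha : 0 < a) (hb : 0 < b) :
    ∫ μ : ℝ, (a ^ 2 + μ ^ 2 * b ^ 2)⁻¹ = π / (a * b) := by
  simp_rw [inv_sq_add_sq_mul_sq_eq ha]
  rw [integral_const_mul, Measure.integral_comp_mul_left (fun x : ℝ => (1 + x ^ 2)⁻¹),
    integral_univ_inv_one_add_sq, smul_eq_mul, abs_of_pos (inv_pos.mpr (div_pos hb ha))]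
  field_simp

lemma integrableOn_Ioi_rpow_mul_add_one_rpow {α β : ℝ} (hα : -1 < α) (hβ : β ≤ 0)
    (hαβ : α + β < -1) : IntegrableOn (fun z : ℝ => z ^ α * (z + 1) ^ β) (Ioi 0) := by
  have hmeas : AEStronglyMeasurable (fun z : ℝ => z ^ α * (z + 1) ^ β) :=
    (by fun_prop : Measurable fun z : ℝ => z ^ α * (z + 1) ^ β).aestronglyMeasurable
  have hnorm {z : ℝ} (hz : 0 < z) : ‖z ^ α * (z + 1) ^ β‖ = z ^ α * (z + 1) ^ β :=
    norm_of_nonneg (by positivity)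
  rw [← Ioc_union_Ioi_eq_Ioi zero_le_one]
  refine IntegrableOn.union ?_ ?_
  · rw [integrableOn_Ioc_iff_integrableOn_Ioo]
    refine ((intervalIntegral.integrableOn_Ioo_rpow_iff one_pos).mpr hα).mono'
      hmeas.restrict ?_
    filter_upwards [ae_restrict_mem measurableSet_Ioo] with z ⟨hz0, _⟩
    rw [hnorm hz0]
    exact mul_le_of_le_one_right (by positivity) (rpow_le_one_of_one_le_of_nonpos (by linarith) hβ)
  · refine (integrableOn_Ioi_rpow_of_lt hαβ one_pos).mono' hmeas.restrict ?_
    filter_upwards [ae_restrict_mem measurableSet_Ioi] with z (hz : 1 < z)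
    rw [hnorm (by linarith), rpow_add (by linarith)]
    exact mul_le_mul_of_nonneg_left (rpow_le_rpow_of_nonpos (by linarith) (by linarith) hβ)
      (by positivity)

lemma integrableOn_Ioi_prod_mul_inv_sq_add_sq_mul_sq {g : ℝ → ℝ} (hg : Measurable g)
    (h : IntegrableOn (fun z => g z / (z * (z + 1))) (Ioi 0)) :
    IntegrableOn (fun zμ : ℝ × ℝ => g zμ.1 * ((zμ.1 + 1) ^ 2 + zμ.2 ^ 2 * zμ.1 ^ 2)⁻¹)
      (Ioi 0 ×ˢ univ) := by
  rw [IntegrableOn, Measure.volume_eq_prod, ← Measure.prod_restrict, Measure.restrict_univ,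
    integrable_prod_iff (by fun_prop)]
  constructor
  · filter_upwards [ae_restrict_mem measurableSet_Ioi] with z (hz : 0 < z)
    exact (integrable_inv_sq_add_sq_mul_sq (by linarith) hz).const_mul _
  · refine IntegrableOn.congr_fun (h.norm.const_mul π) (fun z (hz : 0 < z) => ?_) measurableSet_Ioi
    have hD (μ : ℝ) : 0 < (z + 1) ^ 2 + μ ^ 2 * z ^ 2 := by positivity
    simp only [norm_mul, norm_inv, norm_of_nonneg (hD _).le]
    rw [integral_const_mul, integral_inv_sq_add_sq_mul_sq (by linarith) hz, norm_div,
      norm_of_nonneg (by positivity : 0 ≤ z * (z + 1))]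
    ring

lemma norm_rpow_mul_rpow_div_rpow_le {z μ p e q t : ℝ} (hz : 0 < z) (het : e ≤ t) (ht : 0 ≤ t)
    (htq : t - q ≤ -1) :
    ‖z ^ p * (1 + μ ^ 2 * z ^ 2) ^ e / ((z + 1) ^ 2 + μ ^ 2 * z ^ 2) ^ q‖
      ≤ z ^ p * (z + 1) ^ (2 * (t - q + 1)) * ((z + 1) ^ 2 + μ ^ 2 * z ^ 2)⁻¹ := by
  set D := (z + 1) ^ 2 + μ ^ 2 * z ^ 2
  have hD : 0 < D := by positivity
  have hA : 1 ≤ 1 + μ ^ 2 * z ^ 2 := le_add_of_nonneg_right (by positivity)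
  have hAD : 1 + μ ^ 2 * z ^ 2 ≤ D := by simp only [D]; nlinarith
  have hBD : (z + 1) ^ 2 ≤ D := le_add_of_nonneg_right (by positivity)
  rw [norm_of_nonneg (by positivity)]
  calc z ^ p * (1 + μ ^ 2 * z ^ 2) ^ e / D ^ q
      ≤ z ^ p * D ^ t / D ^ q := by gcongr; exact rpow_le_rpow_of_one_le_of_le hA hAD het ht
    _ = z ^ p * D ^ (t - q) := by rw [rpow_sub hD, mul_div_assoc]
    _ ≤ z ^ p * (((z + 1) ^ 2) ^ (t - q + 1) * D⁻¹) := by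
      gcongr
      exact rpow_le_rpow_add_one_mul_inv (by positivity) hBD htq
    _ = z ^ p * (z + 1) ^ (2 * (t - q + 1)) * D⁻¹ := by
      rw [show (2 : ℝ) * (t - q + 1) = ((2 : ℕ) : ℝ) * (t - q + 1) by norm_num,
        rpow_natCast_mul (by positivity), mul_assoc]

theorem group_averaging_integrable_general (lt jt : ℝ)
    (hlj : 0 < lt + jt)
    (r s r' s' : ℕ) :
    MeasureTheory.IntegrableOn
      (fun zμ : ℝ × ℝ =>
        zμ.1 ^ ((lt + jt)/2 + 1 + (s:ℝ) + (r':ℝ))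
          * (1 + zμ.2^2 * zμ.1^2) ^ (((s':ℝ) - (s:ℝ))/2)
          / ((zμ.1 + 1)^2 + zμ.2^2 * zμ.1^2)
              ^ (1 + (lt + jt + (r:ℝ) + (r':ℝ) + (s:ℝ) + (s':ℝ))/2))
      (Set.Ioi (0:ℝ) ×ˢ (Set.univ : Set ℝ)) := by
  set p := (lt + jt) / 2 + 1 + (s : ℝ) + r' with hp
  set q := 1 + (lt + jt + r + r' + s + s') / 2 with hq
  set c := 2 * ((s' : ℝ) / 2 - q + 1) with hc
  have hr : (0 : ℝ) ≤ r := r.cast_nonneg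
  have hs : (0 : ℝ) ≤ s := s.cast_nonneg
  have hr' : (0 : ℝ) ≤ r' := r'.cast_nonneg
  have hs' : (0 : ℝ) ≤ s' := s'.cast_nonneg
  have hmajorant : IntegrableOn
      (fun zμ : ℝ × ℝ => zμ.1 ^ p * (zμ.1 + 1) ^ c * ((zμ.1 + 1) ^ 2 + zμ.2 ^ 2 * zμ.1 ^ 2)⁻¹)
      (Ioi 0 ×ˢ univ) := by
    refine integrableOn_Ioi_prod_mul_inv_sq_add_sq_mul_sq (g := fun z => z ^ p * (z + 1) ^ c)
      (by fun_prop) ?_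
    refine (integrableOn_Ioi_rpow_mul_add_one_rpow (α := p - 1) (β := c - 1) (by linarith)
      (by linarith) (by linarith)).congr_fun (fun z (hz : 0 < z) => ?_) measurableSet_Ioi
    simp only [rpow_sub_one hz.ne', rpow_sub_one (by linarith : z + 1 ≠ 0)]
    field_simp
  refine hmajorant.mono' (Measurable.aestronglyMeasurable (by fun_prop)) ?_
  filter_upwards [ae_restrict_mem (measurableSet_Ioi.prod MeasurableSet.univ)] with zμ hzμ
  exact norm_rpow_mul_rpow_div_rpow_le hzμ.1 (by linarith) (by linarith) (by linarith)

/-- The key group-averaging convergence estimate: the function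
`F(z,μ) = z^{(l̃+j̃)/2+1+s+r'} (1+μ²z²)^{(s'−s)/2} / [(z+1)²+μ²z²]^{1+(l̃+j̃+r+r'+s+s')/2}`
is integrable over `(0,∞) × ℝ`. -/
theorem group_averaging_integrable (lt jt : ℝ)
    (hl : -1 < lt) (hj : -1 < jt) (hlj : 0 < lt + jt)
    (r s r' s' : ℕ)
    (h1 : 0 < lt + jt + 2*(r:ℝ) + 2*(s:ℝ))
    (h2 : 0 < lt + jt + 1 + (r:ℝ) + 2*(s:ℝ)) :
    MeasureTheory.IntegrableOn
      (fun zμ : ℝ × ℝ =>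
        zμ.1 ^ ((lt + jt)/2 + 1 + (s:ℝ) + (r':ℝ))
          * (1 + zμ.2^2 * zμ.1^2) ^ (((s':ℝ) - (s:ℝ))/2)
          / ((zμ.1 + 1)^2 + zμ.2^2 * zμ.1^2)
              ^ (1 + (lt + jt + (r:ℝ) + (r':ℝ) + (s:ℝ) + (s':ℝ))/2))
      (Set.Ioi (0:ℝ) ×ˢ (Set.univ : Set ℝ)) :=
  group_averaging_integrable_general lt jt hlj r s r' s'

end Stmt17
end

section
/- For m', n' ∈ ℕ, the function G(z, μ) = z² / [(z+1)² + μ²z²]² · ( [(z−1)² + μ²z²] / [(z+1)² + μ²z²] )^{(m'+n')/2} is integrable over (z,μ) ∈ (0,∞) × ℝ. -/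
/-! For `z ≥ 0` the base of the power lies in `[0, 1]`, so the integrand is dominated by its
prefactor, which in turn is dominated by the product `(1 + z²)⁻¹ (1 + μ²)⁻¹` of two Cauchy
densities. -/

open MeasureTheory Set

namespace Stmt18

lemma integrable_inv_one_add_sq_mul_inv_one_add_sq :
    Integrable (fun p : ℝ × ℝ => (1 + p.1 ^ 2)⁻¹ * (1 + p.2 ^ 2)⁻¹) :=
  integrable_inv_one_add_sq.mul_prod integrable_inv_one_add_sq

lemma sq_div_sq_le_inv_one_add_sq_mul {z : ℝ} (hz : 0 ≤ z) (μ : ℝ) :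
    z ^ 2 / ((z + 1) ^ 2 + μ ^ 2 * z ^ 2) ^ 2 ≤ (1 + z ^ 2)⁻¹ * (1 + μ ^ 2)⁻¹ := by
  have h₁ : 1 + z ^ 2 ≤ (z + 1) ^ 2 + μ ^ 2 * z ^ 2 := by nlinarith [sq_nonneg (μ * z)]
  have h₂ : z ^ 2 * (1 + μ ^ 2) ≤ (z + 1) ^ 2 + μ ^ 2 * z ^ 2 := by nlinarith
  rw [← mul_inv, div_le_iff₀ (by positivity), inv_mul_eq_div, le_div_iff₀ (by positivity)]
  calc z ^ 2 * ((1 + z ^ 2) * (1 + μ ^ 2))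
      = (1 + z ^ 2) * (z ^ 2 * (1 + μ ^ 2)) := by ring
    _ ≤ ((z + 1) ^ 2 + μ ^ 2 * z ^ 2) * ((z + 1) ^ 2 + μ ^ 2 * z ^ 2) :=
      mul_le_mul h₁ h₂ (by positivity) (by positivity)
    _ = ((z + 1) ^ 2 + μ ^ 2 * z ^ 2) ^ 2 := (sq _).symm

lemma rpow_div_le_one {z : ℝ} (hz : 0 ≤ z) (μ : ℝ) {s : ℝ} (hs : 0 ≤ s) :
    (((z - 1) ^ 2 + μ ^ 2 * z ^ 2) / ((z + 1) ^ 2 + μ ^ 2 * z ^ 2)) ^ s ≤ 1 := by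
  refine Real.rpow_le_one (by positivity) (div_le_one_of_le₀ ?_ (by positivity)) hs
  nlinarith

/-- The convergence estimate for the modified test space in the `p = 1`, `q = 3` case:
`G(z,μ) = z²/[(z+1)²+μ²z²]² · ([(z−1)²+μ²z²]/[(z+1)²+μ²z²])^{(m'+n')/2}` is
integrable over `(0,∞) × ℝ`. -/
theorem modified_test_space_integrable (m' n' : ℕ) :
    MeasureTheory.IntegrableOn
      (fun zμ : ℝ × ℝ =>
        zμ.1^2 / ((zμ.1 + 1)^2 + zμ.2^2 * zμ.1^2)^2
          * (((zμ.1 - 1)^2 + zμ.2^2 * zμ.1^2) / ((zμ.1 + 1)^2 + zμ.2^2 * zμ.1^2))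
              ^ (((m':ℝ) + (n':ℝ))/2))
      (Set.Ioi (0:ℝ) ×ˢ (Set.univ : Set ℝ)) := by
  refine integrable_inv_one_add_sq_mul_inv_one_add_sq.integrableOn.mono' (by fun_prop) ?_
  rw [ae_restrict_iff' (measurableSet_Ioi.prod .univ)]
  refine .of_forall fun ⟨z, μ⟩ ⟨(hz : 0 < z), _⟩ => ?_
  have hs : 0 ≤ ((m' : ℝ) + n') / 2 := by positivity
  rw [Real.norm_of_nonneg (by positivity)]
  calc _ ≤ z ^ 2 / ((z + 1) ^ 2 + μ ^ 2 * z ^ 2) ^ 2 * 1 :=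
        mul_le_mul_of_nonneg_left (rpow_div_le_one hz.le μ hs) (by positivity)
    _ ≤ _ := by rw [mul_one]; exact sq_div_sq_le_inv_one_add_sq_mul hz.le μ

end Stmt18
end

section
/- Let Φ₀ˢ be the vector space spanned by {φ_{0mn}, φ_{1mn} : m,n ∈ ℕ} with sesquilinear relations induced as follows: suppose B is a Hermitian sesquilinear form on span{ψ_{mn}, φ_{1mn}} with B(φ_{1m'n'}, φ_{1mn}) = 2π²(−1)^{m+m'} δ_{mn} δ_{m'n'} Γ(m+3/2)Γ(m'+3/2)/(Γ(m+1)Γ(m'+1)), B(ψ_{m'n'}, φ_{1mn}) = 0, and that there is a linear operator C with B(Cx,y) = B(x,Cy), Cφ_{1mn} = ψ_{mn}, and Cψ_{mn} = 4[(m+1/2)(n+1/2)(φ_{1mn} + φ_{1,m−1,n−1}) + (m+1)(n+1)(φ_{1mn} + φ_{1,m+1,n+1})]. Then B(ψ_{m'n'}, ψ_{mn}) = −2π²(−1)^{m+m'} δ_{mn} δ_{m'n'} Γ(m+3/2)Γ(m'+3/2)/(Γ(m+1)Γ(m'+1)); in particular B takes both positive and negative values on its diagonal and is indefinite. -/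
/-!
Put `g m = Γ(m + 3/2) / Γ(m + 1)` (`gammaRatio`) and `w m n = (-1)^m δ_{mn} g m` (`phiWeight`).
The hypothesis says `B(φ₁_{m'n'}, φ₁_{mn}) = 2π² w m' n' · w m n`, and because Mathlib's `Γ`
vanishes at the non-positive integers this extends to negative indices, where `φ₁ = 0`.
Symmetry of `C` gives `B(ψ_{m'n'}, ψ_{mn}) = B(φ₁_{m'n'}, C ψ_{mn})`, and the recurrence
`(m + 1) g (m + 1) = (m + 3/2) g m` makes the coefficients of `C ψ_{mn}`, paired against `w`,
collapse to `-w m n`.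
-/

namespace Stmt19

open Real

noncomputable def gammaRatio (m : ℤ) : ℝ := Gamma (m + 3 / 2) / Gamma (m + 1)

lemma gammaRatio_eq_zero_of_neg {m : ℤ} (hm : m < 0) : gammaRatio m = 0 := by
  obtain ⟨k, hk⟩ : ∃ k : ℕ, m + 1 = -k := ⟨(-(m + 1)).toNat, by omega⟩
  have hk' : (m : ℝ) + 1 = -k := by exact_mod_cast hk
  simp [gammaRatio, hk', Gamma_neg_nat_eq_zero]

lemma gammaRatio_pos {m : ℤ} (hm : 0 ≤ m) : 0 < gammaRatio m := by
  have hm' : (0 : ℝ) ≤ m := by exact_mod_cast hm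
  exact div_pos (Gamma_pos_of_pos (by linarith)) (Gamma_pos_of_pos (by linarith))

lemma int_add_three_halves_ne_zero (m : ℤ) : (m : ℝ) + 3 / 2 ≠ 0 := by
  intro h
  have h2 : ((2 * m + 3 : ℤ) : ℝ) = 0 := by push_cast; linarith
  have : 2 * m + 3 = 0 := by exact_mod_cast h2
  omega

lemma add_one_mul_gammaRatio_add_one (m : ℤ) :
    ((m : ℝ) + 1) * gammaRatio (m + 1) = ((m : ℝ) + 3 / 2) * gammaRatio m := by
  by_cases hm : m = -1
  · subst hm
    simp [gammaRatio_eq_zero_of_neg (show (-1 : ℤ) < 0 by norm_num)]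
  have hm1 : (m : ℝ) + 1 ≠ 0 := by exact_mod_cast (show m + 1 ≠ 0 by omega)
  have hnum : Gamma ((m : ℝ) + 1 + 3 / 2) = ((m : ℝ) + 3 / 2) * Gamma (m + 3 / 2) := by
    rw [← Gamma_add_one (int_add_three_halves_ne_zero m)]; ring_nf
  have hden : Gamma ((m : ℝ) + 1 + 1) = ((m : ℝ) + 1) * Gamma (m + 1) := Gamma_add_one hm1
  simp only [gammaRatio]
  push_cast
  rw [hnum, hden, ← mul_div_assoc, mul_div_mul_left _ _ hm1, mul_div_assoc]

noncomputable def phiWeight (m n : ℤ) : ℂ :=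
  (-1 : ℂ) ^ m * (if m = n then 1 else 0) * gammaRatio m

lemma phiWeight_eq_zero_of_neg {m n : ℤ} (h : m < 0 ∨ n < 0) : phiWeight m n = 0 := by
  by_cases hmn : m = n
  · subst hmn
    simp [phiWeight, gammaRatio_eq_zero_of_neg (by omega : m < 0)]
  · simp [phiWeight, hmn]

lemma phiWeight_self_zero : phiWeight 0 0 = gammaRatio 0 := by
  simp [phiWeight]

lemma phiWeight_shift_combination (m n : ℤ) :
    4 * ((m : ℂ) + 1 / 2) * ((n : ℂ) + 1 / 2) * (phiWeight m n + phiWeight (m - 1) (n - 1))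
      + 4 * ((m : ℂ) + 1) * ((n : ℂ) + 1) * (phiWeight m n + phiWeight (m + 1) (n + 1))
      = -phiWeight m n := by
  by_cases hmn : m = n
  · subst hmn
    have hup := congrArg (fun x : ℝ => (x : ℂ)) (add_one_mul_gammaRatio_add_one m)
    have hdown := congrArg (fun x : ℝ => (x : ℂ)) (add_one_mul_gammaRatio_add_one (m - 1))
    simp only [sub_add_cancel] at hdown
    push_cast at hup hdown
    have hne : (-1 : ℂ) ≠ 0 := by norm_num
    simp only [phiWeight, if_true, zpow_add_one₀ hne, zpow_sub_one₀ hne]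
    linear_combination (4 * ((m : ℂ) + 1 / 2) * (-1 : ℂ) ^ m) * hdown
      + (-4 * ((m : ℂ) + 1) * (-1 : ℂ) ^ m) * hup
  · have hdown : m - 1 ≠ n - 1 := by omega
    have hup : m + 1 ≠ n + 1 := by omega
    simp [phiWeight, hmn, hdown, hup]

lemma gamma_pairing_eq_phiWeight (m n m' n' : ℤ) :
    ((2 * π ^ 2 : ℝ) : ℂ) * (-1 : ℂ) ^ (m + m')
        * (if m = n then 1 else 0) * (if m' = n' then 1 else 0)
        * ((Gamma ((m : ℝ) + 3 / 2) * Gamma ((m' : ℝ) + 3 / 2)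
            / (Gamma ((m : ℝ) + 1) * Gamma ((m' : ℝ) + 1)) : ℝ) : ℂ)
      = ((2 * π ^ 2 : ℝ) : ℂ) * phiWeight m' n' * phiWeight m n := by
  simp only [phiWeight, gammaRatio, zpow_add₀ (show (-1 : ℂ) ≠ 0 by norm_num)]
  push_cast
  ring

lemma linearMap_shift_combination {W : Type*} [AddCommGroup W] [Module ℂ W]
    (ℓ : W →ₗ[ℂ] ℂ) (φ : ℤ → ℤ → W) (hφ : ∀ a b : ℤ, a < 0 ∨ b < 0 → φ a b = 0) (κ : ℂ)
    (hℓ : ∀ a b : ℤ, 0 ≤ a → 0 ≤ b → ℓ (φ a b) = κ * phiWeight a b) (m n : ℤ) :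
    ℓ ((4 * ((m : ℂ) + 1 / 2) * ((n : ℂ) + 1 / 2)) • (φ m n + φ (m - 1) (n - 1))
        + (4 * ((m : ℂ) + 1) * ((n : ℂ) + 1)) • (φ m n + φ (m + 1) (n + 1)))
      = -(κ * phiWeight m n) := by
  have hℓ' : ∀ a b, ℓ (φ a b) = κ * phiWeight a b := by
    intro a b
    by_cases hab : 0 ≤ a ∧ 0 ≤ b
    · exact hℓ a b hab.1 hab.2
    · have hneg : a < 0 ∨ b < 0 := by omega
      rw [hφ a b hneg, map_zero, phiWeight_eq_zero_of_neg hneg, mul_zero]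
  simp only [map_add, map_smul, hℓ', smul_eq_mul]
  linear_combination κ * phiWeight_shift_combination m n

theorem group_averaging_indefinite_general
    (W : Type*) [AddCommGroup W] [Module ℂ W]
    (ψ φ1 : ℤ → ℤ → W)
    (hφzero : ∀ m n : ℤ, m < 0 ∨ n < 0 → φ1 m n = 0)
    (B : W → W → ℂ)
    (hadd2 : ∀ x y z, B x (y + z) = B x y + B x z)
    (hsmul2 : ∀ (a : ℂ) x y, B x (a • y) = a * B x y)
    (C : W → W)
    (hsym : ∀ x y, B (C x) y = B x (C y))
    (hCφ : ∀ m n : ℤ, 0 ≤ m → 0 ≤ n → C (φ1 m n) = ψ m n)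
    (hCψ : ∀ m n : ℤ, 0 ≤ m → 0 ≤ n →
      C (ψ m n) =
        (4 * ((m:ℂ) + 1/2) * ((n:ℂ) + 1/2)) • (φ1 m n + φ1 (m-1) (n-1))
        + (4 * ((m:ℂ) + 1) * ((n:ℂ) + 1)) • (φ1 m n + φ1 (m+1) (n+1)))
    (hBφφ : ∀ m n m' n' : ℤ, 0 ≤ m → 0 ≤ n → 0 ≤ m' → 0 ≤ n' →
      B (φ1 m' n') (φ1 m n)
        = ((2 * Real.pi^2 : ℝ) : ℂ) * (-1:ℂ)^(m + m')
          * (if m = n then 1 else 0) * (if m' = n' then 1 else 0)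
          * ((Real.Gamma ((m:ℝ) + 3/2) * Real.Gamma ((m':ℝ) + 3/2)
              / (Real.Gamma ((m:ℝ) + 1) * Real.Gamma ((m':ℝ) + 1)) : ℝ) : ℂ)) :
    (∀ m n m' n' : ℤ, 0 ≤ m → 0 ≤ n → 0 ≤ m' → 0 ≤ n' →
      B (ψ m' n') (ψ m n)
        = -(((2 * Real.pi^2 : ℝ) : ℂ) * (-1:ℂ)^(m + m')
            * (if m = n then 1 else 0) * (if m' = n' then 1 else 0)
            * ((Real.Gamma ((m:ℝ) + 3/2) * Real.Gamma ((m':ℝ) + 3/2)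
                / (Real.Gamma ((m:ℝ) + 1) * Real.Gamma ((m':ℝ) + 1)) : ℝ) : ℂ))) ∧
    (∃ x, 0 < (B x x).re) ∧ (∃ y, (B y y).re < 0) := by
  set κ : ℂ := ((2 * Real.pi ^ 2 : ℝ) : ℂ)
  have hφφ : ∀ m n m' n' : ℤ, 0 ≤ m → 0 ≤ n → 0 ≤ m' → 0 ≤ n' →
      B (φ1 m' n') (φ1 m n) = κ * phiWeight m' n' * phiWeight m n := fun m n m' n' hm hn hm' hn' =>
    (hBφφ m n m' n' hm hn hm' hn').trans (gamma_pairing_eq_phiWeight m n m' n')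
  have hψψ : ∀ m n m' n' : ℤ, 0 ≤ m → 0 ≤ n → 0 ≤ m' → 0 ≤ n' →
      B (ψ m' n') (ψ m n) = -(κ * phiWeight m' n' * phiWeight m n) := by
    intro m n m' n' hm hn hm' hn'
    let ℓ : W →ₗ[ℂ] ℂ :=
      { toFun := B (φ1 m' n'), map_add' := hadd2 _, map_smul' := fun a y => hsmul2 a _ y }
    calc B (ψ m' n') (ψ m n) = ℓ (C (ψ m n)) := by rw [← hCφ m' n' hm' hn', hsym]; rfl
      _ = _ := by
        rw [hCψ m n hm hn]
        exact linearMap_shift_combination ℓ φ1 hφzero _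
          (fun a b ha hb => hφφ a b m' n' ha hb hm' hn') m n
  have hpos : 0 < (κ * phiWeight 0 0 * phiWeight 0 0).re := by
    rw [phiWeight_self_zero]
    have hg := gammaRatio_pos (le_refl (0 : ℤ))
    simp only [κ, ← Complex.ofReal_mul, Complex.ofReal_re]
    positivity
  refine ⟨fun m n m' n' hm hn hm' hn' => ?_, ⟨φ1 0 0, ?_⟩, ⟨ψ 0 0, ?_⟩⟩
  · rw [hψψ m n m' n' hm hn hm' hn', gamma_pairing_eq_phiWeight]
  · rwa [hφφ 0 0 0 0 le_rfl le_rfl le_rfl le_rfl]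
  · rw [hψψ 0 0 0 0 le_rfl le_rfl le_rfl le_rfl, Complex.neg_re]
    linarith

/-- The `p = q = 1` group-averaging sesquilinear form: given the values on the
`φ₁`-sector, the vanishing of the mixed terms, and a symmetric operator `C` with the
stated action, the form on the `ψ`-sector is forced to be
`B(ψ_{m'n'}, ψ_{mn}) = −2π²(−1)^{m+m'} δ_{mn} δ_{m'n'} Γ(m+3/2)Γ(m'+3/2)/(Γ(m+1)Γ(m'+1))`;
in particular `B` takes both positive and negative values on its diagonal and is
indefinite. -/
theorem group_averaging_indefinite
    (W : Type*) [AddCommGroup W] [Module ℂ W]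
    (ψ φ1 : ℤ → ℤ → W)
    (hφzero : ∀ m n : ℤ, m < 0 ∨ n < 0 → φ1 m n = 0)
    (B : W → W → ℂ)
    (hadd1 : ∀ x y z, B (x + y) z = B x z + B y z)
    (hadd2 : ∀ x y z, B x (y + z) = B x y + B x z)
    (hsmul1 : ∀ (a : ℂ) x y, B (a • x) y = (starRingEnd ℂ) a * B x y)
    (hsmul2 : ∀ (a : ℂ) x y, B x (a • y) = a * B x y)
    (hherm : ∀ x y, B x y = (starRingEnd ℂ) (B y x))
    (C : W → W)
    (hsym : ∀ x y, B (C x) y = B x (C y))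
    (hCφ : ∀ m n : ℤ, 0 ≤ m → 0 ≤ n → C (φ1 m n) = ψ m n)
    (hCψ : ∀ m n : ℤ, 0 ≤ m → 0 ≤ n →
      C (ψ m n) =
        (4 * ((m:ℂ) + 1/2) * ((n:ℂ) + 1/2)) • (φ1 m n + φ1 (m-1) (n-1))
        + (4 * ((m:ℂ) + 1) * ((n:ℂ) + 1)) • (φ1 m n + φ1 (m+1) (n+1)))
    (hBφφ : ∀ m n m' n' : ℤ, 0 ≤ m → 0 ≤ n → 0 ≤ m' → 0 ≤ n' →
      B (φ1 m' n') (φ1 m n)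
        = ((2 * Real.pi^2 : ℝ) : ℂ) * (-1:ℂ)^(m + m')
          * (if m = n then 1 else 0) * (if m' = n' then 1 else 0)
          * ((Real.Gamma ((m:ℝ) + 3/2) * Real.Gamma ((m':ℝ) + 3/2)
              / (Real.Gamma ((m:ℝ) + 1) * Real.Gamma ((m':ℝ) + 1)) : ℝ) : ℂ))
    (hBψφ : ∀ m n m' n' : ℤ, 0 ≤ m → 0 ≤ n → 0 ≤ m' → 0 ≤ n' →
      B (ψ m' n') (φ1 m n) = 0) :
    (∀ m n m' n' : ℤ, 0 ≤ m → 0 ≤ n → 0 ≤ m' → 0 ≤ n' →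
      B (ψ m' n') (ψ m n)
        = -(((2 * Real.pi^2 : ℝ) : ℂ) * (-1:ℂ)^(m + m')
            * (if m = n then 1 else 0) * (if m' = n' then 1 else 0)
            * ((Real.Gamma ((m:ℝ) + 3/2) * Real.Gamma ((m':ℝ) + 3/2)
                / (Real.Gamma ((m:ℝ) + 1) * Real.Gamma ((m':ℝ) + 1)) : ℝ) : ℂ))) ∧
    (∃ x, 0 < (B x x).re) ∧ (∃ y, (B y y).re < 0) :=
  group_averaging_indefinite_general W ψ φ1 hφzero B hadd2 hsmul2 C hsym hCφ hCψ hBφφ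

end Stmt19
end
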